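/- arXiv:math/0101064 — 2 statements merged into one kernel-verified Lean document; each statement's English description precedes it below -/
import Mathlib

section
/- Let (H, A, C)_R be a left-left Doi-Koppinen datum over an algebra R (H an R-bialgebroid, A a left H-comodule algebra, C a left H-module coalgebra). Then 𝒞 = C ⊗_R A is an A-coring: it is an A-bimodule with right action by multiplication in A and left action a·(c ⊗_R a') = a_{<-1>}·c ⊗_R a_{<0>} a', with coproduct Δ_𝒞 = Δ_C ⊗_R A (via C ⊗_R A ⊗_A C ⊗_R A ≅ C ⊗_R C ⊗_R A) and counit ε_𝒞 = ε_C ⊗_R A (via R ⊗_R A ≅ A). -/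
open TensorProduct LinearMap MulOpposite

noncomputable section
namespace BGD

variable (k : Type*) [CommRing k] (R H : Type*) [Ring R] [Ring H]
  [Algebra k R] [Algebra k H]
  (sH : R →ₐ[k] H) (tH : Rᵐᵒᵖ →ₐ[k] H)
  (ΔH : H →ₗ[k] H ⊗[k] H) (εH : H →ₗ[k] R)

/-- Balancing relations for `H ⊗_R H` (bimodule structure `r · h · r' = s_H(r) t_H(r') h`). -/
def rel : Submodule k (H ⊗[k] H) :=
  Submodule.span k {x | ∃ (r : R) (a b : H),
    x = (tH (op r) * a) ⊗ₜ[k] b - a ⊗ₜ[k] (sH r * b)}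

/-- Balancing relations for `H ⊗_R H ⊗_R H`, written in `H ⊗ (H ⊗ H)`. -/
def rel3 : Submodule k (H ⊗[k] (H ⊗[k] H)) :=
  Submodule.span k
    ({x | ∃ (r : R) (a : H) (y : H ⊗[k] H),
        x = (tH (op r) * a) ⊗ₜ[k] y -
          a ⊗ₜ[k] ((LinearMap.rTensor H (LinearMap.mulLeft k (sH r))) y)} ∪
     {x | ∃ (r : R) (a b c : H),
        x = a ⊗ₜ[k] ((tH (op r) * b) ⊗ₜ[k] c) - a ⊗ₜ[k] (b ⊗ₜ[k] (sH r * c))})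

/-- `(a ⊗ b) ↦ s_H(ε_H a) * b`. -/
def cl : H ⊗[k] H →ₗ[k] H :=
  LinearMap.mul' k H ∘ₗ TensorProduct.map (sH.toLinearMap ∘ₗ εH) LinearMap.id

/-- `(a ⊗ b) ↦ t_H(ε_H b) * a`. -/
def cr : H ⊗[k] H →ₗ[k] H :=
  LinearMap.mul' k H ∘ₗ
    TensorProduct.map (tH.toLinearMap ∘ₗ (opLinearEquiv k).toLinearMap ∘ₗ εH) LinearMap.id ∘ₗ
    (TensorProduct.comm k H H).toLinearMap

/-- The `R`-bialgebroid axioms for `(H, s_H, t_H, Δ_H, ε_H)`, with the coproduct given by a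
`k`-linear lift `Δ_H : H → H ⊗_k H` of the coproduct `H → H ⊗_R H` (all conditions
involving `H ⊗_R H` are stated modulo the balancing relations). -/
def IsBialgebroid : Prop :=
  (∀ r r' : R, sH r * tH (op r') = tH (op r') * sH r) ∧
  -- `(H, Δ, ε)` is an `R`-coring:
  (∀ h : H, cl k R H sH εH (ΔH h) = h) ∧
  (∀ h : H, cr k R H tH εH (ΔH h) = h) ∧
  (∀ h : H, (rel3 k R H sH tH).mkQ
      ((TensorProduct.assoc k H H H) ((LinearMap.rTensor H ΔH) (ΔH h))) =
    (rel3 k R H sH tH).mkQ ((LinearMap.lTensor H ΔH) (ΔH h))) ∧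
  (∀ (r : R) (h : H), εH (sH r * h) = r * εH h) ∧
  (∀ (r : R) (h : H), εH (tH (op r) * h) = εH h * r) ∧
  (∀ (r : R) (h : H), (rel k R H sH tH).mkQ (ΔH (sH r * h)) =
    (rel k R H sH tH).mkQ ((LinearMap.rTensor H (LinearMap.mulLeft k (sH r))) (ΔH h))) ∧
  (∀ (r : R) (h : H), (rel k R H sH tH).mkQ (ΔH (tH (op r) * h)) =
    (rel k R H sH tH).mkQ
      ((LinearMap.lTensor H (LinearMap.mulLeft k (tH (op r)))) (ΔH h))) ∧
  -- the image of `Δ` lies in the Takeuchi product `H ×_R H`: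
  (∀ (r : R) (h : H),
    (rel k R H sH tH).mkQ ((LinearMap.rTensor H (LinearMap.mulRight k (tH (op r)))) (ΔH h)) =
      (rel k R H sH tH).mkQ ((LinearMap.lTensor H (LinearMap.mulRight k (sH r))) (ΔH h))) ∧
  -- the corestriction of `Δ` is an algebra map:
  (∀ g h : H, (rel k R H sH tH).mkQ (ΔH (g * h)) = (rel k R H sH tH).mkQ (ΔH g * ΔH h)) ∧
  ((rel k R H sH tH).mkQ (ΔH 1) = (rel k R H sH tH).mkQ ((1 : H) ⊗ₜ[k] (1 : H))) ∧
  -- counit conditions: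
  (εH 1 = 1) ∧
  (∀ g h : H, εH (g * h) = εH (g * sH (εH h))) ∧
  (∀ g h : H, εH (g * h) = εH (g * tH (op (εH h))))

section ModuleCoalgebra

variable (C : Type*) [AddCommGroup C] [Module k C]
  (act : H →ₗ[k] C →ₗ[k] C) (ΔC : C →ₗ[k] C ⊗[k] C) (εC : C →ₗ[k] R)

/-- Evaluation `H ⊗ C → C` of the action. -/
def evC : H ⊗[k] C →ₗ[k] C := TensorProduct.lift act

/-- Balancing relations for `C ⊗_R C`, where `C` is an `R`-bimodule via
`r · c · r' = (s_H r · t_H r') · c`. -/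
def relC : Submodule k (C ⊗[k] C) :=
  Submodule.span k {x | ∃ (r : R) (c c' : C),
    x = (act (tH (op r)) c) ⊗ₜ[k] c' - c ⊗ₜ[k] (act (sH r) c')}

/-- Balancing relations for `C ⊗_R C ⊗_R C` inside `C ⊗ (C ⊗ C)`. -/
def relC3 : Submodule k (C ⊗[k] (C ⊗[k] C)) :=
  Submodule.span k
    ({x | ∃ (r : R) (c : C) (y : C ⊗[k] C),
        x = (act (tH (op r)) c) ⊗ₜ[k] y -
          c ⊗ₜ[k] ((LinearMap.rTensor C (act (sH r))) y)} ∪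
     {x | ∃ (r : R) (c c' c'' : C),
        x = c ⊗ₜ[k] ((act (tH (op r)) c') ⊗ₜ[k] c'') -
          c ⊗ₜ[k] (c' ⊗ₜ[k] (act (sH r) c''))})

/-- The diagonal action of `H ⊗ H` on `C ⊗ C`: `(g ⊗ g') ⊗ (c ⊗ c') ↦ g·c ⊗ g'·c'`. -/
def Psi2 : (H ⊗[k] H) ⊗[k] (C ⊗[k] C) →ₗ[k] C ⊗[k] C :=
  TensorProduct.map (evC k H C act) (evC k H C act) ∘ₗ
    (TensorProduct.tensorTensorTensorComm k H H C C).toLinearMap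

/-- `(c ⊗ c') ↦ s_H(ε_C c) · c'`. -/
def clC : C ⊗[k] C →ₗ[k] C :=
  evC k H C act ∘ₗ TensorProduct.map (sH.toLinearMap ∘ₗ εC) LinearMap.id

/-- `(c ⊗ c') ↦ t_H(ε_C c') · c`. -/
def crC : C ⊗[k] C →ₗ[k] C :=
  evC k H C act ∘ₗ
    TensorProduct.map (tH.toLinearMap ∘ₗ (opLinearEquiv k).toLinearMap ∘ₗ εC) LinearMap.id ∘ₗ
    (TensorProduct.comm k C C).toLinearMap

/-- `C` is a left `H`-module coalgebra for the `R`-bialgebroid `H`: a coalgebra in the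
monoidal category of left `H`-modules, i.e. an `R`-coring `(C, Δ_C, ε_C)` with a left
`H`-module structure such that `Δ_C` and `ε_C` are `H`-linear. -/
def IsModuleCoalgebra : Prop :=
  (∀ (g h : H) (c : C), act (g * h) c = act g (act h c)) ∧
  (∀ c : C, act 1 c = c) ∧
  -- `R`-coring axioms:
  (∀ c : C, (relC3 k R H sH tH C act).mkQ
      ((TensorProduct.assoc k C C C) ((LinearMap.rTensor C ΔC) (ΔC c))) =
    (relC3 k R H sH tH C act).mkQ ((LinearMap.lTensor C ΔC) (ΔC c))) ∧
  (∀ c : C, clC k R H sH C act εC (ΔC c) = c) ∧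
  (∀ c : C, crC k R H tH C act εC (ΔC c) = c) ∧
  -- `Δ_C` is `H`-linear: `Δ_C(h · c) = h₍₁₎·c₍₁₎ ⊗_R h₍₂₎·c₍₂₎`:
  (∀ (h : H) (c : C), (relC k R H sH tH C act).mkQ (ΔC (act h c)) =
    (relC k R H sH tH C act).mkQ ((Psi2 k H C act) ((ΔH h) ⊗ₜ[k] (ΔC c)))) ∧
  -- `ε_C` is `H`-linear: `ε_C(h · c) = ε_H(h s_H(ε_C c))`:
  (∀ (h : H) (c : C), εC (act h c) = εH (h * sH (εC c)))

end ModuleCoalgebra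

section ComoduleAlgebra

variable (A : Type*) [Ring A] [Algebra k A] (sA : R →ₐ[k] A) (ρ : A →ₗ[k] H ⊗[k] A)

/-- Balancing relations for `H ⊗_R A`. -/
def relA : Submodule k (H ⊗[k] A) :=
  Submodule.span k {x | ∃ (r : R) (h : H) (a : A),
    x = (tH (op r) * h) ⊗ₜ[k] a - h ⊗ₜ[k] (sA r * a)}

/-- Balancing relations for `H ⊗_R H ⊗_R A` inside `H ⊗ (H ⊗ A)`. -/
def relA3 : Submodule k (H ⊗[k] (H ⊗[k] A)) :=
  Submodule.span k
    ({x | ∃ (r : R) (h : H) (y : H ⊗[k] A),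
        x = (tH (op r) * h) ⊗ₜ[k] y -
          h ⊗ₜ[k] ((LinearMap.rTensor A (LinearMap.mulLeft k (sH r))) y)} ∪
     {x | ∃ (r : R) (h h' : H) (a : A),
        x = h ⊗ₜ[k] ((tH (op r) * h') ⊗ₜ[k] a) - h ⊗ₜ[k] (h' ⊗ₜ[k] (sA r * a))})

/-- `(h ⊗ a) ↦ s_A(ε_H h) * a`. -/
def clA : H ⊗[k] A →ₗ[k] A :=
  LinearMap.mul' k A ∘ₗ TensorProduct.map (sA.toLinearMap ∘ₗ εH) LinearMap.id

/-- `(A, s_A, ρ)` is a left `H`-comodule algebra for the `R`-bialgebroid `H`: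
`(A, s_A)` is an `R`-ring, `(A, ρ)` is a left comodule of the `R`-coring `H` (with `ρ` a
`k`-linear lift of the coaction `A → H ⊗_R A`), the image of `ρ` lies in the Takeuchi
product `H ×_R A`, and the corestriction of `ρ` is an algebra map. -/
def IsComoduleAlgebra : Prop :=
  (∀ a : A, (relA3 k R H sH tH A sA).mkQ
      ((TensorProduct.assoc k H H A) ((LinearMap.rTensor A ΔH) (ρ a))) =
    (relA3 k R H sH tH A sA).mkQ ((LinearMap.lTensor H ρ) (ρ a))) ∧
  (∀ a : A, clA k R H εH A sA (ρ a) = a) ∧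
  (∀ (r : R) (a : A), (relA k R H tH A sA).mkQ (ρ (sA r * a)) =
    (relA k R H tH A sA).mkQ ((LinearMap.rTensor A (LinearMap.mulLeft k (sH r))) (ρ a))) ∧
  (∀ (r : R) (a : A),
    (relA k R H tH A sA).mkQ ((LinearMap.rTensor A (LinearMap.mulRight k (tH (op r)))) (ρ a)) =
      (relA k R H tH A sA).mkQ ((LinearMap.lTensor H (LinearMap.mulRight k (sA r))) (ρ a))) ∧
  (∀ a b : A, (relA k R H tH A sA).mkQ (ρ (a * b)) =
    (relA k R H tH A sA).mkQ (ρ a * ρ b)) ∧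
  ((relA k R H tH A sA).mkQ (ρ 1) = (relA k R H tH A sA).mkQ ((1 : H) ⊗ₜ[k] (1 : A)))

end ComoduleAlgebra

end BGD
end

open TensorProduct LinearMap MulOpposite

/-! Every structure map of `C ⊗_R A` is handled on representatives in `C ⊗_k A`, and each coring
axiom reduces, on elementary tensors, to an axiom of `H`, `C` or `A`. The left `A`-action is the
action of the algebra `H ⊗_k A` on `C ⊗_k A` pulled back along `ρ`, so it is well defined,
associative and unital because `ρ` lands in the Takeuchi product and is multiplicative modulo the
balancing relations. `Δ_C ⊗ A` is `H ⊗ A`-linear because `Δ_C` is `H`-linear, and it is balanced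
because `Δ_H (t_H r) = 1 ⊗ t_H r` in `H ⊗_R H`, whence `Δ_C (t_H r · c) = c₍₁₎ ⊗ t_H r · c₍₂₎`.
The counit is left `A`-linear by the Takeuchi condition and the counit law of `ρ`, after trading
`s_H` for `t_H` inside `ε_H`. -/

theorem Submodule.mkQ_map_eq_of_le_comap {R M N : Type*} [Ring R] [AddCommGroup M] [Module R M]
    [AddCommGroup N] [Module R N] {p : Submodule R M} {q : Submodule R N} {f : M →ₗ[R] N}
    (hf : p ≤ q.comap f) {x y : M} (h : p.mkQ x = p.mkQ y) : q.mkQ (f x) = q.mkQ (f y) := by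
  simp only [Submodule.mkQ_apply, Submodule.Quotient.eq, ← map_sub] at h ⊢
  exact hf h

namespace BGD

variable {k : Type*} [CommRing k] {R H : Type*} [Ring R] [Ring H] [Algebra k R] [Algebra k H]
  {sH : R →ₐ[k] H} {tH : Rᵐᵒᵖ →ₐ[k] H} {ΔH : H →ₗ[k] H ⊗[k] H} {εH : H →ₗ[k] R}
  {C : Type*} [AddCommGroup C] [Module k C]
  {act : H →ₗ[k] C →ₗ[k] C} {ΔC : C →ₗ[k] C ⊗[k] C} {εC : C →ₗ[k] R}
  {A : Type*} [Ring A] [Algebra k A] {sA : R →ₐ[k] A} {ρ : A →ₗ[k] H ⊗[k] A}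

namespace IsBialgebroid

theorem sH_mul_tH_comm (hH : IsBialgebroid k R H sH tH ΔH εH) (r r' : R) :
    sH r * tH (op r') = tH (op r') * sH r :=
  hH.1 r r'

theorem counit_sH_mul (hH : IsBialgebroid k R H sH tH ΔH εH) (r : R) (h : H) :
    εH (sH r * h) = r * εH h :=
  hH.2.2.2.2.1 r h

theorem counit_tH_mul (hH : IsBialgebroid k R H sH tH ΔH εH) (r : R) (h : H) :
    εH (tH (op r) * h) = εH h * r :=
  hH.2.2.2.2.2.1 r h

theorem mkQ_comul_tH_mul (hH : IsBialgebroid k R H sH tH ΔH εH) (r : R) (h : H) :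
    (rel k R H sH tH).mkQ (ΔH (tH (op r) * h)) =
      (rel k R H sH tH).mkQ (lTensor H (mulLeft k (tH (op r))) (ΔH h)) :=
  hH.2.2.2.2.2.2.2.1 r h

theorem mkQ_comul_one (hH : IsBialgebroid k R H sH tH ΔH εH) :
    (rel k R H sH tH).mkQ (ΔH 1) = (rel k R H sH tH).mkQ ((1 : H) ⊗ₜ[k] (1 : H)) :=
  hH.2.2.2.2.2.2.2.2.2.2.1

theorem counit_one (hH : IsBialgebroid k R H sH tH ΔH εH) : εH 1 = 1 :=
  hH.2.2.2.2.2.2.2.2.2.2.2.1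

theorem counit_mul_eq_counit_mul_tH (hH : IsBialgebroid k R H sH tH ΔH εH) (g h : H) :
    εH (g * h) = εH (g * tH (op (εH h))) :=
  hH.2.2.2.2.2.2.2.2.2.2.2.2.2 g h

theorem counit_sH (hH : IsBialgebroid k R H sH tH ΔH εH) (r : R) : εH (sH r) = r := by
  simpa [hH.counit_one] using hH.counit_sH_mul r 1

theorem counit_mul_sH (hH : IsBialgebroid k R H sH tH ΔH εH) (h : H) (r : R) :
    εH (h * sH r) = εH (h * tH (op r)) := by
  rw [hH.counit_mul_eq_counit_mul_tH, hH.counit_sH]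

theorem rel_le_comap_lTensor_mulLeft_tH (hH : IsBialgebroid k R H sH tH ΔH εH) (r : R) :
    rel k R H sH tH ≤ (rel k R H sH tH).comap (lTensor H (mulLeft k (tH (op r)))) := by
  refine Submodule.span_le.mpr ?_
  rintro _ ⟨r', a, b, rfl⟩
  have hcomm : tH (op r) * (sH r' * b) = sH r' * (tH (op r) * b) := by
    rw [← mul_assoc, ← hH.sH_mul_tH_comm, mul_assoc]
  simp only [SetLike.mem_coe, Submodule.mem_comap, map_sub, lTensor_tmul, mulLeft_apply, hcomm]
  exact Submodule.subset_span ⟨r', a, tH (op r) * b, rfl⟩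

theorem mkQ_comul_tH (hH : IsBialgebroid k R H sH tH ΔH εH) (r : R) :
    (rel k R H sH tH).mkQ (ΔH (tH (op r))) = (rel k R H sH tH).mkQ (1 ⊗ₜ[k] tH (op r)) := by
  calc (rel k R H sH tH).mkQ (ΔH (tH (op r)))
      = (rel k R H sH tH).mkQ (lTensor H (mulLeft k (tH (op r))) (ΔH 1)) := by
        simpa using hH.mkQ_comul_tH_mul r 1
    _ = (rel k R H sH tH).mkQ (lTensor H (mulLeft k (tH (op r))) (1 ⊗ₜ[k] 1)) :=
        Submodule.mkQ_map_eq_of_le_comap (hH.rel_le_comap_lTensor_mulLeft_tH r) hH.mkQ_comul_one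
    _ = (rel k R H sH tH).mkQ (1 ⊗ₜ[k] tH (op r)) := by simp

end IsBialgebroid

@[simp] theorem Psi2_tmul (g g' : H) (c c' : C) :
    Psi2 k H C act ((g ⊗ₜ[k] g') ⊗ₜ[k] (c ⊗ₜ[k] c')) = act g c ⊗ₜ[k] act g' c' := by
  simp [Psi2, evC]

theorem Psi2_one_tmul (hone : ∀ c : C, act 1 c = c) (g : H) (z : C ⊗[k] C) :
    Psi2 k H C act (((1 : H) ⊗ₜ[k] g) ⊗ₜ[k] z) = lTensor C (act g) z := by
  induction z using TensorProduct.induction_on <;> simp_all [tmul_add]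

theorem rel_le_comap_Psi2 (hmul : ∀ (g h : H) (c : C), act (g * h) c = act g (act h c))
    (z : C ⊗[k] C) :
    rel k R H sH tH ≤
      (relC k R H sH tH C act).comap (Psi2 k H C act ∘ₗ (TensorProduct.mk k _ _).flip z) := by
  refine Submodule.span_le.mpr ?_
  rintro _ ⟨r, g, g', rfl⟩
  simp only [SetLike.mem_coe, Submodule.mem_comap, coe_comp, Function.comp_apply, flip_apply,
    mk_apply, map_sub]
  induction z using TensorProduct.induction_on with
  | zero => simp
  | tmul c c' =>
    simp only [Psi2_tmul, hmul]
    exact Submodule.subset_span ⟨r, act g c, act g' c', rfl⟩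
  | add u v hu hv =>
    simpa only [tmul_add, map_add, add_sub_add_comm] using Submodule.add_mem _ hu hv

namespace IsModuleCoalgebra

theorem act_mul (hC : IsModuleCoalgebra k R H sH tH ΔH εH C act ΔC εC) (g h : H) (c : C) :
    act (g * h) c = act g (act h c) :=
  hC.1 g h c

theorem act_one (hC : IsModuleCoalgebra k R H sH tH ΔH εH C act ΔC εC) (c : C) : act 1 c = c :=
  hC.2.1 c

theorem mkQ_coassoc (hC : IsModuleCoalgebra k R H sH tH ΔH εH C act ΔC εC) (c : C) :
    (relC3 k R H sH tH C act).mkQ (TensorProduct.assoc k C C C (rTensor C ΔC (ΔC c))) =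
      (relC3 k R H sH tH C act).mkQ (lTensor C ΔC (ΔC c)) :=
  hC.2.2.1 c

theorem clC_comul (hC : IsModuleCoalgebra k R H sH tH ΔH εH C act ΔC εC) (c : C) :
    clC k R H sH C act εC (ΔC c) = c :=
  hC.2.2.2.1 c

theorem crC_comul (hC : IsModuleCoalgebra k R H sH tH ΔH εH C act ΔC εC) (c : C) :
    crC k R H tH C act εC (ΔC c) = c :=
  hC.2.2.2.2.1 c

theorem mkQ_comul_act (hC : IsModuleCoalgebra k R H sH tH ΔH εH C act ΔC εC) (h : H) (c : C) :
    (relC k R H sH tH C act).mkQ (ΔC (act h c)) =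
      (relC k R H sH tH C act).mkQ (Psi2 k H C act (ΔH h ⊗ₜ[k] ΔC c)) :=
  hC.2.2.2.2.2.1 h c

theorem counit_act (hC : IsModuleCoalgebra k R H sH tH ΔH εH C act ΔC εC) (h : H) (c : C) :
    εC (act h c) = εH (h * sH (εC c)) :=
  hC.2.2.2.2.2.2 h c

theorem counit_act_tH (hH : IsBialgebroid k R H sH tH ΔH εH)
    (hC : IsModuleCoalgebra k R H sH tH ΔH εH C act ΔC εC) (r : R) (c : C) :
    εC (act (tH (op r)) c) = εC c * r := by
  rw [hC.counit_act, hH.counit_tH_mul, hH.counit_sH]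

theorem mkQ_comul_act_tH (hH : IsBialgebroid k R H sH tH ΔH εH)
    (hC : IsModuleCoalgebra k R H sH tH ΔH εH C act ΔC εC) (r : R) (c : C) :
    (relC k R H sH tH C act).mkQ (ΔC (act (tH (op r)) c)) =
      (relC k R H sH tH C act).mkQ (lTensor C (act (tH (op r))) (ΔC c)) := by
  calc (relC k R H sH tH C act).mkQ (ΔC (act (tH (op r)) c))
      = (relC k R H sH tH C act).mkQ (Psi2 k H C act (ΔH (tH (op r)) ⊗ₜ[k] ΔC c)) :=
        hC.mkQ_comul_act _ c
    _ = (relC k R H sH tH C act).mkQ (Psi2 k H C act ((1 ⊗ₜ[k] tH (op r)) ⊗ₜ[k] ΔC c)) :=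
        Submodule.mkQ_map_eq_of_le_comap (rel_le_comap_Psi2 hC.act_mul (ΔC c))
          (hH.mkQ_comul_tH r)
    _ = (relC k R H sH tH C act).mkQ (lTensor C (act (tH (op r))) (ΔC c)) := by
        rw [Psi2_one_tmul hC.act_one]

end IsModuleCoalgebra

namespace IsComoduleAlgebra

theorem clA_coact (hA : IsComoduleAlgebra k R H sH tH ΔH εH A sA ρ) (a : A) :
    clA k R H εH A sA (ρ a) = a :=
  hA.2.1 a

theorem mkQ_coact_takeuchi (hA : IsComoduleAlgebra k R H sH tH ΔH εH A sA ρ) (r : R) (a : A) :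
    (relA k R H tH A sA).mkQ (rTensor A (mulRight k (tH (op r))) (ρ a)) =
      (relA k R H tH A sA).mkQ (lTensor H (mulRight k (sA r)) (ρ a)) :=
  hA.2.2.2.1 r a

theorem mkQ_coact_mul (hA : IsComoduleAlgebra k R H sH tH ΔH εH A sA ρ) (a b : A) :
    (relA k R H tH A sA).mkQ (ρ (a * b)) = (relA k R H tH A sA).mkQ (ρ a * ρ b) :=
  hA.2.2.2.2.1 a b

theorem mkQ_coact_one (hA : IsComoduleAlgebra k R H sH tH ΔH εH A sA ρ) :
    (relA k R H tH A sA).mkQ (ρ 1) = (relA k R H tH A sA).mkQ ((1 : H) ⊗ₜ[k] (1 : A)) :=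
  hA.2.2.2.2.2

end IsComoduleAlgebra

end BGD

namespace DoiKoppinen

open BGD

variable {k : Type*} [CommRing k] {R H : Type*} [Ring R] [Ring H] [Algebra k R] [Algebra k H]
  {C : Type*} [AddCommGroup C] [Module k C] {A : Type*} [Ring A] [Algebra k A]

def actCA (act : H →ₗ[k] C →ₗ[k] C) : (H ⊗[k] A) ⊗[k] (C ⊗[k] A) →ₗ[k] C ⊗[k] A :=
  TensorProduct.map (TensorProduct.lift act) (LinearMap.mul' k A) ∘ₗ
    (TensorProduct.tensorTensorTensorComm k H A C A).toLinearMap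

def relCA (tH : Rᵐᵒᵖ →ₐ[k] H) (act : H →ₗ[k] C →ₗ[k] C) (sA : R →ₐ[k] A) :
    Submodule k (C ⊗[k] A) :=
  Submodule.span k {x | ∃ (r : R) (c : C) (a : A),
    x = (act (tH (op r)) c) ⊗ₜ[k] a - c ⊗ₜ[k] (sA r * a)}

section Action

variable {tH : Rᵐᵒᵖ →ₐ[k] H} {act : H →ₗ[k] C →ₗ[k] C} {sA : R →ₐ[k] A}

@[simp] theorem actCA_tmul (h : H) (a : A) (c : C) (a' : A) :
    actCA act ((h ⊗ₜ[k] a) ⊗ₜ[k] (c ⊗ₜ[k] a')) = act h c ⊗ₜ[k] (a * a') := by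
  simp [actCA]

theorem actCA_one_tmul (hone : ∀ c : C, act 1 c = c) (x : C ⊗[k] A) :
    actCA act (((1 : H) ⊗ₜ[k] (1 : A)) ⊗ₜ[k] x) = x := by
  induction x using TensorProduct.induction_on <;> simp_all [tmul_add]

theorem actCA_mul_tmul (hmul : ∀ (g h : H) (c : C), act (g * h) c = act g (act h c))
    (y z : H ⊗[k] A) (x : C ⊗[k] A) :
    actCA act ((y * z) ⊗ₜ[k] x) = actCA act (y ⊗ₜ[k] actCA act (z ⊗ₜ[k] x)) := by
  induction y using TensorProduct.induction_on with
  | zero => simp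
  | add u v hu hv => simp only [add_mul, add_tmul, map_add, hu, hv]
  | tmul h a =>
    induction z using TensorProduct.induction_on with
    | zero => simp
    | add u v hu hv => simp only [mul_add, add_tmul, tmul_add, map_add, hu, hv]
    | tmul h' a' =>
      induction x using TensorProduct.induction_on with
      | zero => simp
      | add u v hu hv => simp only [tmul_add, map_add, hu, hv]
      | tmul c a'' => simp [Algebra.TensorProduct.tmul_mul_tmul, hmul, mul_assoc]

theorem actCA_tmul_lTensor_mulRight (y : H ⊗[k] A) (x : C ⊗[k] A) (b : A) :
    actCA act (y ⊗ₜ[k] lTensor C (mulRight k b) x) =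
      lTensor C (mulRight k b) (actCA act (y ⊗ₜ[k] x)) := by
  induction y using TensorProduct.induction_on with
  | zero => simp
  | add u v hu hv => simp only [add_tmul, map_add, hu, hv]
  | tmul h a =>
    induction x using TensorProduct.induction_on <;> simp_all [tmul_add, mul_assoc]

theorem actCA_tmul_act_tmul (hmul : ∀ (g h : H) (c : C), act (g * h) c = act g (act h c))
    (y : H ⊗[k] A) (g : H) (c : C) (a' : A) :
    actCA act (y ⊗ₜ[k] (act g c ⊗ₜ[k] a')) =
      actCA act (rTensor A (mulRight k g) y ⊗ₜ[k] (c ⊗ₜ[k] a')) := by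
  induction y using TensorProduct.induction_on <;> simp_all [add_tmul]

theorem actCA_tmul_tmul_mul (y : H ⊗[k] A) (c : C) (b a' : A) :
    actCA act (y ⊗ₜ[k] (c ⊗ₜ[k] (b * a'))) =
      actCA act (lTensor H (mulRight k b) y ⊗ₜ[k] (c ⊗ₜ[k] a')) := by
  induction y using TensorProduct.induction_on <;> simp_all [add_tmul, mul_assoc]

theorem relA_le_comap_actCA (hmul : ∀ (g h : H) (c : C), act (g * h) c = act g (act h c))
    (x : C ⊗[k] A) :
    relA k R H tH A sA ≤
      (relCA tH act sA).comap (actCA act ∘ₗ (TensorProduct.mk k _ _).flip x) := by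
  refine Submodule.span_le.mpr ?_
  rintro _ ⟨r, h, a, rfl⟩
  simp only [SetLike.mem_coe, Submodule.mem_comap, coe_comp, Function.comp_apply, flip_apply,
    mk_apply, map_sub]
  induction x using TensorProduct.induction_on with
  | zero => simp
  | tmul c a' =>
    simp only [actCA_tmul, hmul, mul_assoc]
    exact Submodule.subset_span ⟨r, act h c, a * a', rfl⟩
  | add u v hu hv =>
    simpa only [tmul_add, map_add, add_sub_add_comm] using Submodule.add_mem _ hu hv

end Action

section LeftModule

variable {sH : R →ₐ[k] H} {tH : Rᵐᵒᵖ →ₐ[k] H} {ΔH : H →ₗ[k] H ⊗[k] H} {εH : H →ₗ[k] R}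
  {act : H →ₗ[k] C →ₗ[k] C} {ΔC : C →ₗ[k] C ⊗[k] C} {εC : C →ₗ[k] R}
  {sA : R →ₐ[k] A} {ρ : A →ₗ[k] H ⊗[k] A}

theorem mkQ_actCA_coact_act_tH_tmul (hC : IsModuleCoalgebra k R H sH tH ΔH εH C act ΔC εC)
    (hA : IsComoduleAlgebra k R H sH tH ΔH εH A sA ρ) (a : A) (r : R) (c : C) (a' : A) :
    (relCA tH act sA).mkQ (actCA act (ρ a ⊗ₜ[k] (act (tH (op r)) c ⊗ₜ[k] a'))) =
      (relCA tH act sA).mkQ (actCA act (ρ a ⊗ₜ[k] (c ⊗ₜ[k] (sA r * a')))) := by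
  rw [actCA_tmul_act_tmul hC.act_mul, actCA_tmul_tmul_mul]
  exact Submodule.mkQ_map_eq_of_le_comap (relA_le_comap_actCA hC.act_mul _)
    (hA.mkQ_coact_takeuchi r a)

theorem mkQ_actCA_coact_mul (hC : IsModuleCoalgebra k R H sH tH ΔH εH C act ΔC εC)
    (hA : IsComoduleAlgebra k R H sH tH ΔH εH A sA ρ) (a b : A) (x : C ⊗[k] A) :
    (relCA tH act sA).mkQ (actCA act (ρ (a * b) ⊗ₜ[k] x)) =
      (relCA tH act sA).mkQ (actCA act (ρ a ⊗ₜ[k] actCA act (ρ b ⊗ₜ[k] x))) := by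
  rw [← actCA_mul_tmul hC.act_mul]
  exact Submodule.mkQ_map_eq_of_le_comap (relA_le_comap_actCA hC.act_mul x)
    (hA.mkQ_coact_mul a b)

theorem mkQ_actCA_coact_one (hC : IsModuleCoalgebra k R H sH tH ΔH εH C act ΔC εC)
    (hA : IsComoduleAlgebra k R H sH tH ΔH εH A sA ρ) (x : C ⊗[k] A) :
    (relCA tH act sA).mkQ (actCA act (ρ 1 ⊗ₜ[k] x)) = (relCA tH act sA).mkQ x := by
  conv_rhs => rw [← actCA_one_tmul hC.act_one x]
  exact Submodule.mkQ_map_eq_of_le_comap (relA_le_comap_actCA hC.act_mul x) hA.mkQ_coact_one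

end LeftModule

section TmulRight

variable {M N P : Type*} [AddCommGroup M] [Module k M] [AddCommGroup N] [Module k N]
  [AddCommGroup P] [Module k P]

def tmulRight (p : P) : N →ₗ[k] N ⊗[k] P := (TensorProduct.mk k N P).flip p

@[simp] theorem tmulRight_apply (p : P) (n : N) : tmulRight p n = n ⊗ₜ[k] p := rfl

theorem assoc_tmul_eq_lTensor_tmulRight (u : M ⊗[k] N) (p : P) :
    TensorProduct.assoc k M N P (u ⊗ₜ[k] p) = lTensor M (tmulRight p) u := by
  induction u using TensorProduct.induction_on <;> simp_all [add_tmul]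

end TmulRight

def comulCA (ΔC : C →ₗ[k] C ⊗[k] C) : C ⊗[k] A →ₗ[k] C ⊗[k] (C ⊗[k] A) :=
  (TensorProduct.assoc k C C A).toLinearMap ∘ₗ rTensor A ΔC

def actCCA (act : H →ₗ[k] C →ₗ[k] C) :
    (H ⊗[k] (H ⊗[k] A)) ⊗[k] (C ⊗[k] (C ⊗[k] A)) →ₗ[k] C ⊗[k] (C ⊗[k] A) :=
  TensorProduct.map (TensorProduct.lift act) (actCA act) ∘ₗ
    (TensorProduct.tensorTensorTensorComm k H (H ⊗[k] A) C (C ⊗[k] A)).toLinearMap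

def relCCA (sH : R →ₐ[k] H) (tH : Rᵐᵒᵖ →ₐ[k] H) (act : H →ₗ[k] C →ₗ[k] C) (sA : R →ₐ[k] A) :
    Submodule k (C ⊗[k] (C ⊗[k] A)) :=
  Submodule.span k
    ({x | ∃ (r : R) (c : C) (y : C ⊗[k] A),
        x = (act (tH (op r)) c) ⊗ₜ[k] y - c ⊗ₜ[k] ((rTensor A (act (sH r))) y)} ∪
     {x | ∃ (r : R) (c c' : C) (a : A),
        x = c ⊗ₜ[k] ((act (tH (op r)) c') ⊗ₜ[k] a) - c ⊗ₜ[k] (c' ⊗ₜ[k] (sA r * a))})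

def relCCCA (sH : R →ₐ[k] H) (tH : Rᵐᵒᵖ →ₐ[k] H) (act : H →ₗ[k] C →ₗ[k] C) (sA : R →ₐ[k] A) :
    Submodule k (C ⊗[k] (C ⊗[k] (C ⊗[k] A))) :=
  Submodule.span k
    ({x | ∃ (r : R) (c : C) (y : C ⊗[k] (C ⊗[k] A)),
        x = (act (tH (op r)) c) ⊗ₜ[k] y - c ⊗ₜ[k] ((rTensor (C ⊗[k] A) (act (sH r))) y)} ∪
     {x | ∃ (r : R) (c c' : C) (y : C ⊗[k] A),
        x = c ⊗ₜ[k] ((act (tH (op r)) c') ⊗ₜ[k] y) -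
          c ⊗ₜ[k] (c' ⊗ₜ[k] ((rTensor A (act (sH r))) y))} ∪
     {x | ∃ (r : R) (c c' c'' : C) (a : A),
        x = c ⊗ₜ[k] (c' ⊗ₜ[k] ((act (tH (op r)) c'') ⊗ₜ[k] a)) -
          c ⊗ₜ[k] (c' ⊗ₜ[k] (c'' ⊗ₜ[k] (sA r * a)))})

section Comultiplication

variable {sH : R →ₐ[k] H} {tH : Rᵐᵒᵖ →ₐ[k] H} {ΔH : H →ₗ[k] H ⊗[k] H} {εH : H →ₗ[k] R}
  {act : H →ₗ[k] C →ₗ[k] C} {ΔC : C →ₗ[k] C ⊗[k] C} {εC : C →ₗ[k] R} {sA : R →ₐ[k] A}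

theorem comulCA_tmul (c : C) (a : A) :
    comulCA ΔC (c ⊗ₜ[k] a) = lTensor C (tmulRight a) (ΔC c) :=
  assoc_tmul_eq_lTensor_tmulRight (ΔC c) a

@[simp] theorem actCCA_tmul (g : H) (y : H ⊗[k] A) (c : C) (z : C ⊗[k] A) :
    actCCA act ((g ⊗ₜ[k] y) ⊗ₜ[k] (c ⊗ₜ[k] z)) = act g c ⊗ₜ[k] actCA act (y ⊗ₜ[k] z) := by
  simp [actCCA]

theorem comulCA_lTensor_mulRight (x : C ⊗[k] A) (b : A) :
    comulCA ΔC (lTensor C (mulRight k b) x) =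
      lTensor C (lTensor C (mulRight k b)) (comulCA ΔC x) := by
  induction x using TensorProduct.induction_on with
  | zero => simp
  | add u v hu hv => simp only [map_add, hu, hv]
  | tmul c a =>
    simp only [lTensor_tmul, mulRight_apply, comulCA_tmul]
    induction ΔC c using TensorProduct.induction_on <;> simp_all

theorem relC_le_comap_lTensor_tmulRight (a : A) :
    relC k R H sH tH C act ≤ (relCCA sH tH act sA).comap (lTensor C (tmulRight a)) := by
  refine Submodule.span_le.mpr ?_
  rintro _ ⟨r, c, c', rfl⟩
  refine Submodule.subset_span (Set.mem_union_left _ ⟨r, c, c' ⊗ₜ[k] a, ?_⟩)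
  simp

theorem mkQ_lTensor_tmulRight_lTensor_act_tH (r : R) (a : A) (v : C ⊗[k] C) :
    (relCCA sH tH act sA).mkQ (lTensor C (tmulRight a) (lTensor C (act (tH (op r))) v)) =
      (relCCA sH tH act sA).mkQ (lTensor C (tmulRight (sA r * a)) v) := by
  rw [Submodule.mkQ_apply, Submodule.mkQ_apply, Submodule.Quotient.eq]
  induction v using TensorProduct.induction_on with
  | zero => simp
  | tmul c c' => exact Submodule.subset_span (Set.mem_union_right _ ⟨r, c, c', a, by simp⟩)
  | add u v hu hv =>
    simpa only [map_add, add_sub_add_comm] using Submodule.add_mem _ hu hv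

theorem mkQ_comulCA_act_tH_tmul (hH : IsBialgebroid k R H sH tH ΔH εH)
    (hC : IsModuleCoalgebra k R H sH tH ΔH εH C act ΔC εC) (r : R) (c : C) (a : A) :
    (relCCA sH tH act sA).mkQ (comulCA ΔC (act (tH (op r)) c ⊗ₜ[k] a)) =
      (relCCA sH tH act sA).mkQ (comulCA ΔC (c ⊗ₜ[k] (sA r * a))) := by
  rw [comulCA_tmul, comulCA_tmul, ← mkQ_lTensor_tmulRight_lTensor_act_tH]
  exact Submodule.mkQ_map_eq_of_le_comap (relC_le_comap_lTensor_tmulRight a)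
    (hC.mkQ_comul_act_tH hH r c)

theorem assoc_Psi2_tmul_mul (u : H ⊗[k] H) (v : C ⊗[k] C) (a a' : A) :
    TensorProduct.assoc k C C A (Psi2 k H C act (u ⊗ₜ[k] v) ⊗ₜ[k] (a * a')) =
      actCCA act (TensorProduct.assoc k H H A (u ⊗ₜ[k] a) ⊗ₜ[k]
        TensorProduct.assoc k C C A (v ⊗ₜ[k] a')) := by
  induction u using TensorProduct.induction_on with
  | zero => simp
  | add u₁ u₂ h₁ h₂ => simp only [add_tmul, map_add, h₁, h₂]
  | tmul g g' =>
    induction v using TensorProduct.induction_on with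
    | zero => simp
    | add v₁ v₂ h₁ h₂ => simp only [tmul_add, map_add, add_tmul, h₁, h₂]
    | tmul c c' => simp

theorem mkQ_comulCA_actCA (hC : IsModuleCoalgebra k R H sH tH ΔH εH C act ΔC εC)
    (y : H ⊗[k] A) (x : C ⊗[k] A) :
    (relCCA sH tH act sA).mkQ (comulCA ΔC (actCA act (y ⊗ₜ[k] x))) =
      (relCCA sH tH act sA).mkQ
        (actCCA act (TensorProduct.assoc k H H A (rTensor A ΔH y) ⊗ₜ[k] comulCA ΔC x)) := by
  induction y using TensorProduct.induction_on with
  | zero => simp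
  | add y₁ y₂ h₁ h₂ => simp only [add_tmul, map_add, h₁, h₂]
  | tmul h a =>
    induction x using TensorProduct.induction_on with
    | zero => simp
    | add x₁ x₂ h₁ h₂ => simp only [tmul_add, map_add, h₁, h₂]
    | tmul c a' =>
      calc (relCCA sH tH act sA).mkQ (comulCA ΔC (actCA act ((h ⊗ₜ[k] a) ⊗ₜ[k] (c ⊗ₜ[k] a'))))
          = (relCCA sH tH act sA).mkQ (lTensor C (tmulRight (a * a')) (ΔC (act h c))) := by
            rw [actCA_tmul, comulCA_tmul]
        _ = (relCCA sH tH act sA).mkQ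
              (lTensor C (tmulRight (a * a')) (Psi2 k H C act (ΔH h ⊗ₜ[k] ΔC c))) :=
            Submodule.mkQ_map_eq_of_le_comap (relC_le_comap_lTensor_tmulRight _)
              (hC.mkQ_comul_act h c)
        _ = _ := by
            rw [← assoc_tmul_eq_lTensor_tmulRight, assoc_Psi2_tmul_mul, rTensor_tmul,
              comulCA_tmul, ← assoc_tmul_eq_lTensor_tmulRight (ΔC c)]

theorem relC3_le_comap_lTensor_lTensor_tmulRight (a : A) :
    relC3 k R H sH tH C act ≤
      (relCCCA sH tH act sA).comap (lTensor C (lTensor C (tmulRight a))) := by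
  refine Submodule.span_le.mpr ?_
  rintro _ (⟨r, c, y, rfl⟩ | ⟨r, c, c', c'', rfl⟩)
  · have hcomm : lTensor C (tmulRight a) (rTensor C (act (sH r)) y) =
        rTensor (C ⊗[k] A) (act (sH r)) (lTensor C (tmulRight a) y) := by
      induction y using TensorProduct.induction_on <;> simp_all
    refine Submodule.subset_span (Set.mem_union_left _ (Set.mem_union_left _
      ⟨r, c, lTensor C (tmulRight a) y, ?_⟩))
    simp [hcomm]
  · refine Submodule.subset_span (Set.mem_union_left _ (Set.mem_union_right _
      ⟨r, c, c', c'' ⊗ₜ[k] a, ?_⟩))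
    simp

theorem assoc_rTensor_comul_lTensor_tmulRight (v : C ⊗[k] C) (a : A) :
    TensorProduct.assoc k C C (C ⊗[k] A) (rTensor (C ⊗[k] A) ΔC (lTensor C (tmulRight a) v)) =
      lTensor C (lTensor C (tmulRight a)) (TensorProduct.assoc k C C C (rTensor C ΔC v)) := by
  induction v using TensorProduct.induction_on with
  | zero => simp
  | add u v hu hv => simp only [map_add, hu, hv]
  | tmul c c' =>
    simp only [lTensor_tmul, tmulRight_apply, rTensor_tmul]
    induction ΔC c using TensorProduct.induction_on <;> simp_all [add_tmul]

theorem lTensor_comulCA_lTensor_tmulRight (v : C ⊗[k] C) (a : A) :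
    lTensor C (comulCA ΔC) (lTensor C (tmulRight a) v) =
      lTensor C (lTensor C (tmulRight a)) (lTensor C ΔC v) := by
  induction v using TensorProduct.induction_on <;> simp_all [comulCA_tmul]

theorem mkQ_coassoc_comulCA (hC : IsModuleCoalgebra k R H sH tH ΔH εH C act ΔC εC)
    (x : C ⊗[k] A) :
    (relCCCA sH tH act sA).mkQ
        (TensorProduct.assoc k C C (C ⊗[k] A) (rTensor (C ⊗[k] A) ΔC (comulCA ΔC x))) =
      (relCCCA sH tH act sA).mkQ (lTensor C (comulCA ΔC) (comulCA ΔC x)) := by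
  induction x using TensorProduct.induction_on with
  | zero => simp
  | add u v hu hv => simp only [map_add, hu, hv]
  | tmul c a =>
    rw [comulCA_tmul, assoc_rTensor_comul_lTensor_tmulRight, lTensor_comulCA_lTensor_tmulRight]
    exact Submodule.mkQ_map_eq_of_le_comap (relC3_le_comap_lTensor_lTensor_tmulRight a)
      (hC.mkQ_coassoc c)

end Comultiplication

def counitCA (εC : C →ₗ[k] R) (sA : R →ₐ[k] A) : C ⊗[k] A →ₗ[k] A :=
  LinearMap.mul' k A ∘ₗ TensorProduct.map (sA.toLinearMap ∘ₗ εC) LinearMap.id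

section Counit

variable {sH : R →ₐ[k] H} {tH : Rᵐᵒᵖ →ₐ[k] H} {ΔH : H →ₗ[k] H ⊗[k] H} {εH : H →ₗ[k] R}
  {act : H →ₗ[k] C →ₗ[k] C} {ΔC : C →ₗ[k] C ⊗[k] C} {εC : C →ₗ[k] R}
  {sA : R →ₐ[k] A} {ρ : A →ₗ[k] H ⊗[k] A}

@[simp] theorem counitCA_tmul (c : C) (a : A) : counitCA εC sA (c ⊗ₜ[k] a) = sA (εC c) * a := by
  simp [counitCA]

@[simp] theorem clA_tmul (h : H) (a : A) : clA k R H εH A sA (h ⊗ₜ[k] a) = sA (εH h) * a := by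
  simp [clA]

theorem counitCA_act_tH_tmul (hH : IsBialgebroid k R H sH tH ΔH εH)
    (hC : IsModuleCoalgebra k R H sH tH ΔH εH C act ΔC εC) (r : R) (c : C) (a : A) :
    counitCA εC sA (act (tH (op r)) c ⊗ₜ[k] a) = counitCA εC sA (c ⊗ₜ[k] (sA r * a)) := by
  simp [hC.counit_act_tH hH, mul_assoc]

theorem counitCA_lTensor_mulRight (x : C ⊗[k] A) (b : A) :
    counitCA εC sA (lTensor C (mulRight k b) x) = counitCA εC sA x * b := by
  induction x using TensorProduct.induction_on <;> simp_all [mul_assoc, add_mul]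

theorem clA_lTensor_mulRight (y : H ⊗[k] A) (b : A) :
    clA k R H εH A sA (lTensor H (mulRight k b) y) = clA k R H εH A sA y * b := by
  induction y using TensorProduct.induction_on <;> simp_all [mul_assoc, add_mul]

theorem relA_le_ker_clA (hH : IsBialgebroid k R H sH tH ΔH εH) :
    relA k R H tH A sA ≤ LinearMap.ker (clA k R H εH A sA) := by
  refine Submodule.span_le.mpr ?_
  rintro _ ⟨r, h, a, rfl⟩
  simp [hH.counit_tH_mul, mul_assoc]

theorem clA_eq_of_mkQ_eq (hH : IsBialgebroid k R H sH tH ΔH εH) {y y' : H ⊗[k] A}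
    (h : (relA k R H tH A sA).mkQ y = (relA k R H tH A sA).mkQ y') :
    clA k R H εH A sA y = clA k R H εH A sA y' := by
  rw [Submodule.mkQ_apply, Submodule.mkQ_apply, Submodule.Quotient.eq] at h
  simpa [sub_eq_zero] using relA_le_ker_clA hH h

theorem counitCA_actCA_tmul (hH : IsBialgebroid k R H sH tH ΔH εH)
    (hC : IsModuleCoalgebra k R H sH tH ΔH εH C act ΔC εC) (y : H ⊗[k] A) (c : C) (a : A) :
    counitCA εC sA (actCA act (y ⊗ₜ[k] (c ⊗ₜ[k] a))) =
      clA k R H εH A sA (rTensor A (mulRight k (tH (op (εC c)))) y) * a := by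
  induction y using TensorProduct.induction_on <;>
    simp_all [hC.counit_act, hH.counit_mul_sH, mul_assoc, add_mul, add_tmul]

theorem counitCA_actCA_coact (hH : IsBialgebroid k R H sH tH ΔH εH)
    (hC : IsModuleCoalgebra k R H sH tH ΔH εH C act ΔC εC)
    (hA : IsComoduleAlgebra k R H sH tH ΔH εH A sA ρ) (a : A) (x : C ⊗[k] A) :
    counitCA εC sA (actCA act (ρ a ⊗ₜ[k] x)) = a * counitCA εC sA x := by
  induction x using TensorProduct.induction_on with
  | zero => simp
  | add u v hu hv => simp only [tmul_add, map_add, mul_add, hu, hv]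
  | tmul c a' =>
    rw [counitCA_actCA_tmul hH hC, clA_eq_of_mkQ_eq hH (hA.mkQ_coact_takeuchi _ a),
      clA_lTensor_mulRight, hA.clA_coact, counitCA_tmul, mul_assoc]

theorem rTensor_assoc_symm_comulCA (hC : IsModuleCoalgebra k R H sH tH ΔH εH C act ΔC εC)
    (x : C ⊗[k] A) :
    rTensor A (TensorProduct.lift (act ∘ₗ sH.toLinearMap ∘ₗ εC))
      ((TensorProduct.assoc k C C A).symm (comulCA ΔC x)) = x := by
  induction x using TensorProduct.induction_on with
  | zero => simp
  | add u v hu hv => simp only [map_add, hu, hv]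
  | tmul c a =>
    have hclC (u : C ⊗[k] C) :
        rTensor A (TensorProduct.lift (act ∘ₗ sH.toLinearMap ∘ₗ εC))
          ((TensorProduct.assoc k C C A).symm (lTensor C (tmulRight a) u)) =
        clC k R H sH C act εC u ⊗ₜ[k] a := by
      induction u using TensorProduct.induction_on <;> simp_all [clC, evC, add_tmul]
    rw [comulCA_tmul, hclC, hC.clC_comul]

theorem mkQ_lTensor_counitCA_comulCA (hC : IsModuleCoalgebra k R H sH tH ΔH εH C act ΔC εC)
    (x : C ⊗[k] A) :
    (relCA tH act sA).mkQ (lTensor C (counitCA εC sA) (comulCA ΔC x)) =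
      (relCA tH act sA).mkQ x := by
  induction x using TensorProduct.induction_on with
  | zero => simp
  | add u v hu hv => simp only [map_add, hu, hv]
  | tmul c a =>
    have hcrC (u : C ⊗[k] C) :
        lTensor C (counitCA εC sA) (lTensor C (tmulRight a) u) -
          crC k R H tH C act εC u ⊗ₜ[k] a ∈ relCA tH act sA := by
      induction u using TensorProduct.induction_on with
      | zero => simp
      | tmul c₁ c₂ =>
        rw [← neg_mem_iff, neg_sub]
        exact Submodule.subset_span ⟨εC c₂, c₁, a, by simp [crC, evC]⟩
      | add u v hu hv =>
        simpa only [map_add, add_tmul, add_sub_add_comm] using Submodule.add_mem _ hu hv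
    rw [comulCA_tmul, Submodule.mkQ_apply, Submodule.mkQ_apply, Submodule.Quotient.eq]
    simpa only [hC.crC_comul] using hcrC (ΔC c)

end Counit

end DoiKoppinen

/-- Let `(H, A, C)_R` be a left-left Doi-Koppinen datum over `R`.  Then
`𝒞 = C ⊗_R A` is an `A`-coring: an `A`-bimodule with right action by multiplication and
left action `a · (c ⊗ a') = a₍₋₁₎·c ⊗ a₍₀₎a'`, coproduct `Δ_C ⊗_R A` and counit
`ε_C ⊗_R A` (i.e. `c ⊗ a ↦ s_A(ε_C c) a`).  All structure maps are expressed on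
representatives in `C ⊗_k A`; well-definedness modulo the balancing relations is part of
the statement, as are the `A`-bimodule, coassociativity and counit axioms. -/
theorem stmt16 (k : Type*) [CommRing k] (R H : Type*) [Ring R] [Ring H]
    [Algebra k R] [Algebra k H]
    (sH : R →ₐ[k] H) (tH : Rᵐᵒᵖ →ₐ[k] H)
    (ΔH : H →ₗ[k] H ⊗[k] H) (εH : H →ₗ[k] R)
    (C : Type*) [AddCommGroup C] [Module k C]
    (act : H →ₗ[k] C →ₗ[k] C) (ΔC : C →ₗ[k] C ⊗[k] C) (εC : C →ₗ[k] R)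
    (A : Type*) [Ring A] [Algebra k A] (sA : R →ₐ[k] A) (ρ : A →ₗ[k] H ⊗[k] A)
    (hbgd : BGD.IsBialgebroid k R H sH tH ΔH εH)
    (hC : BGD.IsModuleCoalgebra k R H sH tH ΔH εH C act ΔC εC)
    (hA : BGD.IsComoduleAlgebra k R H sH tH ΔH εH A sA ρ) :
    -- `C ⊗_R A`: balancing relations
    letI relCA : Submodule k (C ⊗[k] A) := Submodule.span k
      {x | ∃ (r : R) (c : C) (a : A),
        x = (act (tH (op r)) c) ⊗ₜ[k] a - c ⊗ₜ[k] (sA r * a)}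
    -- `(h ⊗ a₀) ⊗ (c ⊗ a') ↦ h·c ⊗ a₀a'`
    letI inn : (H ⊗[k] A) ⊗[k] (C ⊗[k] A) →ₗ[k] C ⊗[k] A :=
      TensorProduct.map (TensorProduct.lift act) (LinearMap.mul' k A) ∘ₗ
        (TensorProduct.tensorTensorTensorComm k H A C A).toLinearMap
    -- the left `A`-action `a · (c ⊗ a') = a₍₋₁₎·c ⊗ a₍₀₎a'`
    letI lam : A → (C ⊗[k] A →ₗ[k] C ⊗[k] A) := fun a =>
      inn ∘ₗ TensorProduct.mk k (H ⊗[k] A) (C ⊗[k] A) (ρ a)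
    -- the coproduct `Δ_𝒞 = Δ_C ⊗ A : C ⊗ A → C ⊗ (C ⊗ A)`
    letI D : C ⊗[k] A →ₗ[k] C ⊗[k] (C ⊗[k] A) :=
      (TensorProduct.assoc k C C A).toLinearMap ∘ₗ LinearMap.rTensor A ΔC
    -- balancing relations for `C ⊗_R C ⊗_R A`
    letI rel3 : Submodule k (C ⊗[k] (C ⊗[k] A)) := Submodule.span k
      ({x | ∃ (r : R) (c : C) (y : C ⊗[k] A),
          x = (act (tH (op r)) c) ⊗ₜ[k] y -
            c ⊗ₜ[k] ((LinearMap.rTensor A (act (sH r))) y)} ∪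
       {x | ∃ (r : R) (c c' : C) (a : A),
          x = c ⊗ₜ[k] ((act (tH (op r)) c') ⊗ₜ[k] a) - c ⊗ₜ[k] (c' ⊗ₜ[k] (sA r * a))})
    -- balancing relations for `C ⊗_R C ⊗_R C ⊗_R A`
    letI rel4 : Submodule k (C ⊗[k] (C ⊗[k] (C ⊗[k] A))) := Submodule.span k
      ({x | ∃ (r : R) (c : C) (y : C ⊗[k] (C ⊗[k] A)),
          x = (act (tH (op r)) c) ⊗ₜ[k] y -
            c ⊗ₜ[k] ((LinearMap.rTensor (C ⊗[k] A) (act (sH r))) y)} ∪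
       {x | ∃ (r : R) (c c' : C) (y : C ⊗[k] A),
          x = c ⊗ₜ[k] ((act (tH (op r)) c') ⊗ₜ[k] y) -
            c ⊗ₜ[k] (c' ⊗ₜ[k] ((LinearMap.rTensor A (act (sH r))) y))} ∪
       {x | ∃ (r : R) (c c' c'' : C) (a : A),
          x = c ⊗ₜ[k] (c' ⊗ₜ[k] ((act (tH (op r)) c'') ⊗ₜ[k] a)) -
            c ⊗ₜ[k] (c' ⊗ₜ[k] (c'' ⊗ₜ[k] (sA r * a)))})
    -- the left `A`-action on `C ⊗ (C ⊗ A)`: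
    -- `a · (c ⊗ c' ⊗ a') = a₍₋₂₎·c ⊗ a₍₋₁₎·c' ⊗ a₍₀₎a'`
    letI lam3 : A → (C ⊗[k] (C ⊗[k] A) →ₗ[k] C ⊗[k] (C ⊗[k] A)) := fun a =>
      (TensorProduct.map (TensorProduct.lift act) inn ∘ₗ
        (TensorProduct.tensorTensorTensorComm k H (H ⊗[k] A) C (C ⊗[k] A)).toLinearMap) ∘ₗ
        TensorProduct.mk k (H ⊗[k] (H ⊗[k] A)) (C ⊗[k] (C ⊗[k] A))
          ((TensorProduct.assoc k H H A) ((LinearMap.rTensor A ΔH) (ρ a)))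
    -- the counit `E(c ⊗ a) = s_A(ε_C c) a`
    letI E : C ⊗[k] A →ₗ[k] A :=
      LinearMap.mul' k A ∘ₗ TensorProduct.map (sA.toLinearMap ∘ₗ εC) LinearMap.id
    -- `(ε_𝒞 ⊗_A id)` and `(id ⊗_A ε_𝒞)` evaluated on `C ⊗ (C ⊗ A)`
    letI e1 : C ⊗[k] (C ⊗[k] A) →ₗ[k] C ⊗[k] A :=
      LinearMap.rTensor A (TensorProduct.lift (act ∘ₗ sH.toLinearMap ∘ₗ εC)) ∘ₗ
        (TensorProduct.assoc k C C A).symm.toLinearMap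
    letI e2 : C ⊗[k] (C ⊗[k] A) →ₗ[k] C ⊗[k] A := LinearMap.lTensor C E
    -- the statement: `𝒞 = (C ⊗ A)⧸relCA` is an `A`-coring:
    -- (1) the left `A`-action is well defined, associative and unital:
    (∀ (a : A) (r : R) (c : C) (a' : A),
      relCA.mkQ (lam a ((act (tH (op r)) c) ⊗ₜ[k] a')) =
        relCA.mkQ (lam a (c ⊗ₜ[k] (sA r * a')))) ∧
    (∀ (a b : A) (x : C ⊗[k] A),
      relCA.mkQ (lam (a * b) x) = relCA.mkQ (lam a (lam b x))) ∧
    (∀ x : C ⊗[k] A, relCA.mkQ (lam 1 x) = relCA.mkQ x) ∧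
    -- (2) left and right actions commute:
    (∀ (a a' : A) (x : C ⊗[k] A),
      lam a ((LinearMap.lTensor C (LinearMap.mulRight k a')) x) =
        (LinearMap.lTensor C (LinearMap.mulRight k a')) (lam a x)) ∧
    -- (3) the coproduct is well defined and an `A`-bimodule map:
    (∀ (r : R) (c : C) (a' : A),
      rel3.mkQ (D ((act (tH (op r)) c) ⊗ₜ[k] a')) =
        rel3.mkQ (D (c ⊗ₜ[k] (sA r * a')))) ∧
    (∀ (a : A) (x : C ⊗[k] A), rel3.mkQ (D (lam a x)) = rel3.mkQ (lam3 a (D x))) ∧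
    (∀ (a' : A) (x : C ⊗[k] A),
      D ((LinearMap.lTensor C (LinearMap.mulRight k a')) x) =
        (LinearMap.lTensor C (LinearMap.lTensor C (LinearMap.mulRight k a'))) (D x)) ∧
    -- (4) coassociativity:
    (∀ x : C ⊗[k] A,
      rel4.mkQ ((TensorProduct.assoc k C C (C ⊗[k] A))
          ((LinearMap.rTensor (C ⊗[k] A) ΔC) (D x))) =
        rel4.mkQ ((LinearMap.lTensor C D) (D x))) ∧
    -- (5) the counit is well defined and an `A`-bimodule map:
    (∀ (r : R) (c : C) (a' : A),
      E ((act (tH (op r)) c) ⊗ₜ[k] a') = E (c ⊗ₜ[k] (sA r * a'))) ∧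
    (∀ (a : A) (x : C ⊗[k] A), E (lam a x) = a * E x) ∧
    (∀ (a' : A) (x : C ⊗[k] A),
      E ((LinearMap.lTensor C (LinearMap.mulRight k a')) x) = E x * a') ∧
    -- (6) counit axioms:
    (∀ x : C ⊗[k] A, relCA.mkQ (e1 (D x)) = relCA.mkQ x) ∧
    (∀ x : C ⊗[k] A, relCA.mkQ (e2 (D x)) = relCA.mkQ x) := by
  open DoiKoppinen in
  exact ⟨mkQ_actCA_coact_act_tH_tmul hC hA, mkQ_actCA_coact_mul hC hA,
    mkQ_actCA_coact_one hC hA, fun a b x => actCA_tmul_lTensor_mulRight (ρ a) x b,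
    mkQ_comulCA_act_tH_tmul hbgd hC, fun a => mkQ_comulCA_actCA hC (ρ a),
    fun b x => comulCA_lTensor_mulRight x b, mkQ_coassoc_comulCA hC,
    counitCA_act_tH_tmul hbgd hC, counitCA_actCA_coact hbgd hC hA,
    fun b x => counitCA_lTensor_mulRight x b,
    fun x => congrArg _ (rTensor_assoc_symm_comulCA hC x), mkQ_lTensor_counitCA_comulCA hC⟩
end

section
/- Let (H, A, C)_R be a left-left Doi-Koppinen datum over R and 𝒞 = C ⊗_R A the associated A-coring. Then the category of left 𝒞-comodules is isomorphic to the category of left-left Doi-Koppinen modules over R associated to (H, A, C)_R, i.e. left A-modules M with a left C-comodule (over the R-coring C) structure ρ_M satisfying ρ_M(a·m) = a_{<-1>}·m_{<-1>} ⊗_R a_{<0>}·m_{<0>}. -/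
/-!
A `𝒞`-coaction `ρ' : M → 𝒞 ⊗_A M` and a Doi-Koppinen coaction `ρ_M : M → C ⊗_R M` are
translated into each other by the canonical isomorphism `C ⊗_R M ≅ (C ⊗_R A) ⊗_A M`,
`c ⊗ m ↦ (c ⊗ 1) ⊗ m`, with inverse `(c ⊗ a) ⊗ m ↦ c ⊗ a·m`. It intertwines the diagonal action
`a·(c ⊗ m) = a₍₋₁₎·c ⊗ a₍₀₎·m` with the left action of `A` on `𝒞`, which transfers `A`-linearity;
its two-fold analogue `C ⊗_R C ⊗_R M ≅ 𝒞 ⊗_A 𝒞 ⊗_A M`, `c ⊗ y ↦ (c ⊗ 1) ⊗ y`, carries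
`(Δ_C ⊗ M) ∘ ρ_M` to `(Δ_𝒞 ⊗ M) ∘ ρ'`, which transfers coassociativity; the counits agree on the
nose.

Tensor products over `R` and `A` are quotients of tensor products over `k` by spans of balancing
relations, so the work lies in checking that these maps respect the relations. This is where
`s_H` and `t_H` commute, and where `ρ` is used to land in the Takeuchi product and to be
multiplicative and unital modulo balancing.
-/
open TensorProduct LinearMap MulOpposite

namespace DoiKoppinen

section Generic

variable {k : Type*} [CommRing k] {X Y Z : Type*} [AddCommGroup X] [Module k X]
  [AddCommGroup Y] [Module k Y] [AddCommGroup Z] [Module k Z]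

theorem apply_mem_of_mem_span {s : Set X} {p : Submodule k Y} {f : X →ₗ[k] Y}
    (h : ∀ x ∈ s, f x ∈ p) {x : X} (hx : x ∈ Submodule.span k s) : f x ∈ p :=
  Submodule.span_le (p := p.comap f) |>.2 h hx

theorem apply_mem_of_forall_tmul {p : Submodule k Z} {f : X ⊗[k] Y →ₗ[k] Z}
    (h : ∀ x y, f (x ⊗ₜ y) ∈ p) (t : X ⊗[k] Y) : f t ∈ p := by
  have hle : Submodule.span k {t : X ⊗[k] Y | ∃ x y, x ⊗ₜ y = t} ≤ p.comap f :=
    Submodule.span_le.2 fun _ ⟨x, y, hxy⟩ => hxy ▸ h x y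
  exact hle (span_tmul_eq_top k X Y ▸ Submodule.mem_top)

theorem apply_mem_of_forall_tmul_tmul {W : Type*} [AddCommGroup W] [Module k W]
    {V : Type*} [AddCommGroup V] [Module k V] {p : Submodule k W}
    {f : (X ⊗[k] Y) ⊗[k] V →ₗ[k] W} (h : ∀ x y v, f ((x ⊗ₜ y) ⊗ₜ v) ∈ p)
    (t : (X ⊗[k] Y) ⊗[k] V) : f t ∈ p :=
  apply_mem_of_forall_tmul (fun u v =>
    apply_mem_of_forall_tmul (f := f ∘ₗ (TensorProduct.mk k _ _).flip v) (fun x y => h x y v) u) t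

end Generic

variable {k : Type*} [CommRing k] {R H : Type*} [Ring R] [Ring H] [Algebra k R] [Algebra k H]
  (sH : R →ₐ[k] H) (tH : Rᵐᵒᵖ →ₐ[k] H)
  {C : Type*} [AddCommGroup C] [Module k C] (act : H →ₗ[k] C →ₗ[k] C)
  {A : Type*} [Ring A] [Algebra k A] (sA : R →ₐ[k] A) (ρ : A →ₗ[k] H ⊗[k] A)
  {M : Type*} [AddCommGroup M] [Module k M] (am : A →ₗ[k] M →ₗ[k] M)

def tensorAct : (H ⊗[k] A) ⊗[k] (C ⊗[k] M) →ₗ[k] C ⊗[k] M :=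
  map (lift act) (lift am) ∘ₗ (tensorTensorTensorComm k H A C M).toLinearMap

@[simp] theorem tensorAct_tmul (h : H) (a : A) (c : C) (m : M) :
    tensorAct act am ((h ⊗ₜ a) ⊗ₜ (c ⊗ₜ m)) = act h c ⊗ₜ am a m := by
  simp [tensorAct]

def diagSMul (a : A) : C ⊗[k] M →ₗ[k] C ⊗[k] M :=
  tensorAct act am ∘ₗ TensorProduct.mk k _ _ (ρ a)

theorem diagSMul_apply (a : A) (x : C ⊗[k] M) :
    diagSMul act ρ am a x = tensorAct act am (ρ a ⊗ₜ x) := rfl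

def relTensor : Submodule k (C ⊗[k] M) := Submodule.span k
  {x | ∃ (r : R) (c : C) (m : M), x = act (tH (op r)) c ⊗ₜ m - c ⊗ₜ am (sA r) m}

def relTensor₃ : Submodule k (C ⊗[k] (C ⊗[k] M)) := Submodule.span k
  ({x | ∃ (r : R) (c : C) (y : C ⊗[k] M),
      x = act (tH (op r)) c ⊗ₜ y - c ⊗ₜ rTensor M (act (sH r)) y} ∪
   {x | ∃ (r : R) (c c' : C) (m : M),
      x = c ⊗ₜ (act (tH (op r)) c' ⊗ₜ m) - c ⊗ₜ (c' ⊗ₜ am (sA r) m)})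

def relCoringTensor : Submodule k ((C ⊗[k] A) ⊗[k] M) := Submodule.span k
  ({x | ∃ (r : R) (c : C) (a : A) (m : M),
      x = (act (tH (op r)) c ⊗ₜ a - c ⊗ₜ (sA r * a)) ⊗ₜ m} ∪
   {x | ∃ (a' : A) (y : C ⊗[k] A) (m : M),
      x = lTensor C (mulRight k a') y ⊗ₜ m - y ⊗ₜ am a' m})

def relCoringTensor₃ : Submodule k ((C ⊗[k] A) ⊗[k] ((C ⊗[k] A) ⊗[k] M)) := Submodule.span k
  ({x | ∃ (r : R) (c : C) (a : A) (z : (C ⊗[k] A) ⊗[k] M),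
      x = (act (tH (op r)) c ⊗ₜ a - c ⊗ₜ (sA r * a)) ⊗ₜ z} ∪
   {x | ∃ (a' : A) (y : C ⊗[k] A) (z : (C ⊗[k] A) ⊗[k] M),
      x = lTensor C (mulRight k a') y ⊗ₜ z - y ⊗ₜ rTensor M (diagSMul act ρ (mul k A) a') z} ∪
   {x | ∃ (y : C ⊗[k] A) (w : (C ⊗[k] A) ⊗[k] M),
      w ∈ relCoringTensor tH act sA am ∧ x = y ⊗ₜ w})

variable (k A) in
def toCoringTensor : C ⊗[k] M →ₗ[k] (C ⊗[k] A) ⊗[k] M :=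
  rTensor M ((TensorProduct.mk k C A).flip 1)

def ofCoringTensor : (C ⊗[k] A) ⊗[k] M →ₗ[k] C ⊗[k] M :=
  lTensor C (lift am) ∘ₗ (TensorProduct.assoc k C A M).toLinearMap

variable (A) in
def coringComul (ΔC : C →ₗ[k] C ⊗[k] C) : C ⊗[k] A →ₗ[k] (C ⊗[k] A) ⊗[k] (C ⊗[k] A) :=
  map ((TensorProduct.mk k C A).flip 1) LinearMap.id ∘ₗ
    (TensorProduct.assoc k C C A).toLinearMap ∘ₗ rTensor A ΔC

variable (k A) in
def toCoringTensor₃ : C ⊗[k] (C ⊗[k] M) →ₗ[k] (C ⊗[k] A) ⊗[k] ((C ⊗[k] A) ⊗[k] M) :=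
  map ((TensorProduct.mk k C A).flip 1) (toCoringTensor k A)

def ofCoringTensor₃ : (C ⊗[k] A) ⊗[k] ((C ⊗[k] A) ⊗[k] M) →ₗ[k] C ⊗[k] (C ⊗[k] M) :=
  lTensor C (tensorAct act am ∘ₗ rTensor _ ρ) ∘ₗ
    (TensorProduct.assoc k C A _).toLinearMap ∘ₗ lTensor _ (ofCoringTensor am)

@[simp] theorem toCoringTensor_tmul (c : C) (m : M) :
    toCoringTensor k A (c ⊗ₜ m) = (c ⊗ₜ (1 : A)) ⊗ₜ m := by
  simp [toCoringTensor]

@[simp] theorem ofCoringTensor_tmul (c : C) (a : A) (m : M) :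
    ofCoringTensor am ((c ⊗ₜ a) ⊗ₜ m) = c ⊗ₜ am a m := by
  simp [ofCoringTensor]

@[simp] theorem toCoringTensor₃_tmul (c : C) (y : C ⊗[k] M) :
    toCoringTensor₃ k A (c ⊗ₜ y) = (c ⊗ₜ (1 : A)) ⊗ₜ toCoringTensor k A y := by
  simp [toCoringTensor₃]

@[simp] theorem ofCoringTensor₃_tmul (c : C) (a : A) (z : (C ⊗[k] A) ⊗[k] M) :
    ofCoringTensor₃ act ρ am ((c ⊗ₜ a) ⊗ₜ z) = c ⊗ₜ diagSMul act ρ am a (ofCoringTensor am z) := by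
  simp [ofCoringTensor₃, diagSMul_apply]

def IsDKCoaction (ΔC : C →ₗ[k] C ⊗[k] C) (εC : C →ₗ[k] R) (ρM : M →ₗ[k] C ⊗[k] M) : Prop :=
  (∀ m : M, (relTensor₃ sH tH act sA am).mkQ
      (TensorProduct.assoc k C C M (rTensor M ΔC (ρM m))) =
    (relTensor₃ sH tH act sA am).mkQ (lTensor C ρM (ρM m))) ∧
  (∀ m : M, lift (am ∘ₗ sA.toLinearMap ∘ₗ εC) (ρM m) = m) ∧
  (∀ (a : A) (m : M), (relTensor tH act sA am).mkQ (ρM (am a m)) =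
    (relTensor tH act sA am).mkQ (diagSMul act ρ am a (ρM m)))

def IsCoringCoaction (ΔC : C →ₗ[k] C ⊗[k] C) (εC : C →ₗ[k] R)
    (ρ' : M →ₗ[k] (C ⊗[k] A) ⊗[k] M) : Prop :=
  (∀ m : M, (relCoringTensor₃ tH act sA ρ am).mkQ
      (TensorProduct.assoc k (C ⊗[k] A) (C ⊗[k] A) M (rTensor M (coringComul A ΔC) (ρ' m))) =
    (relCoringTensor₃ tH act sA ρ am).mkQ (lTensor (C ⊗[k] A) ρ' (ρ' m))) ∧
  (∀ m : M, lift (am ∘ₗ mul' k A ∘ₗ map (sA.toLinearMap ∘ₗ εC) LinearMap.id) (ρ' m) = m) ∧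
  (∀ (a : A) (m : M), (relCoringTensor tH act sA am).mkQ (ρ' (am a m)) =
    (relCoringTensor tH act sA am).mkQ (rTensor M (diagSMul act ρ (mul k A) a) (ρ' m)))

variable {sH tH act sA ρ am}

theorem tmul_sub_tmul_mem_relTensor (r : R) (c : C) (m : M) :
    act (tH (op r)) c ⊗ₜ m - c ⊗ₜ am (sA r) m ∈ relTensor tH act sA am :=
  Submodule.subset_span ⟨r, c, m, rfl⟩

theorem tensorAct_one_tmul (hact_one : ∀ c : C, act 1 c = c) (ham_one : ∀ m : M, am 1 m = m)
    (x : C ⊗[k] M) : tensorAct act am (((1 : H) ⊗ₜ (1 : A)) ⊗ₜ x) = x := by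
  induction x using TensorProduct.induction_on with
  | zero => simp
  | tmul c m => simp [hact_one, ham_one]
  | add x y hx hy => simp [tmul_add, hx, hy]

theorem tensorAct_tmul_tensorAct (hact_mul : ∀ (g h : H) (c : C), act (g * h) c = act g (act h c))
    (ham_mul : ∀ (a b : A) (m : M), am (a * b) m = am a (am b m)) (w w' : H ⊗[k] A)
    (x : C ⊗[k] M) :
    tensorAct act am (w ⊗ₜ tensorAct act am (w' ⊗ₜ x)) = tensorAct act am ((w * w') ⊗ₜ x) := by
  induction w using TensorProduct.induction_on with
  | zero => simp
  | add w₁ w₂ h₁ h₂ => simp [add_tmul, add_mul, h₁, h₂]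
  | tmul h a =>
    induction w' using TensorProduct.induction_on with
    | zero => simp
    | add w₁ w₂ h₁ h₂ => simp [add_tmul, tmul_add, mul_add, h₁, h₂]
    | tmul h' a' =>
      induction x using TensorProduct.induction_on with
      | zero => simp
      | add x y hx hy => simp [tmul_add, hx, hy]
      | tmul c m => simp [hact_mul, ham_mul]

theorem tensorAct_mem_relTensor (hact_mul : ∀ (g h : H) (c : C), act (g * h) c = act g (act h c))
    (ham_mul : ∀ (a b : A) (m : M), am (a * b) m = am a (am b m)) {w : H ⊗[k] A}
    (hw : w ∈ BGD.relA k R H tH A sA) (x : C ⊗[k] M) :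
    tensorAct act am (w ⊗ₜ x) ∈ relTensor tH act sA am := by
  refine apply_mem_of_mem_span (f := tensorAct act am ∘ₗ (TensorProduct.mk k _ _).flip x) ?_ hw
  rintro _ ⟨r, h, a, rfl⟩
  refine apply_mem_of_forall_tmul (f := tensorAct act am ∘ₗ TensorProduct.mk k _ _ _)
    (fun c m => ?_) x
  convert tmul_sub_tmul_mem_relTensor r (act h c) (am a m) using 1
  simp [hact_mul, ham_mul]


theorem tmul_sub_tmul_mem_relA (r : R) (h : H) (a : A) :
    (tH (op r) * h) ⊗ₜ a - h ⊗ₜ (sA r * a) ∈ BGD.relA k R H tH A sA :=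
  Submodule.subset_span ⟨r, h, a, rfl⟩

theorem rTensor_mulLeft_mem_relA (hst : ∀ r r' : R, sH r * tH (op r') = tH (op r') * sH r)
    (r : R) {w : H ⊗[k] A} (hw : w ∈ BGD.relA k R H tH A sA) :
    rTensor A (mulLeft k (sH r)) w ∈ BGD.relA k R H tH A sA := by
  refine apply_mem_of_mem_span ?_ hw
  rintro _ ⟨r', h, a, rfl⟩
  convert tmul_sub_tmul_mem_relA (sA := sA) r' (sH r * h) a using 1
  simp [← mul_assoc, hst]

theorem rho_sA_sub_mem_relA (hst : ∀ r r' : R, sH r * tH (op r') = tH (op r') * sH r)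
    (hρ_sA : ∀ (r : R) (a : A), (BGD.relA k R H tH A sA).mkQ (ρ (sA r * a)) =
      (BGD.relA k R H tH A sA).mkQ (rTensor A (mulLeft k (sH r)) (ρ a)))
    (hρ_one : (BGD.relA k R H tH A sA).mkQ (ρ 1) =
      (BGD.relA k R H tH A sA).mkQ ((1 : H) ⊗ₜ[k] (1 : A)))
    (r : R) : ρ (sA r) - sH r ⊗ₜ (1 : A) ∈ BGD.relA k R H tH A sA := by
  have h₁ := (Submodule.Quotient.eq _).1 (hρ_sA r 1)
  have h₂ := rTensor_mulLeft_mem_relA hst r ((Submodule.Quotient.eq _).1 hρ_one)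
  simp only [mul_one, map_sub, rTensor_tmul, mulLeft_apply] at h₁ h₂
  simpa using add_mem h₁ h₂

theorem diagSMul_mem_relTensor
    (hact_mul : ∀ (g h : H) (c : C), act (g * h) c = act g (act h c))
    (ham_mul : ∀ (a b : A) (m : M), am (a * b) m = am a (am b m))
    (hρ_takeuchi : ∀ (r : R) (a : A),
      (BGD.relA k R H tH A sA).mkQ (rTensor A (mulRight k (tH (op r))) (ρ a)) =
        (BGD.relA k R H tH A sA).mkQ (lTensor H (mulRight k (sA r)) (ρ a)))
    (a : A) {x : C ⊗[k] M} (hx : x ∈ relTensor tH act sA am) :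
    diagSMul act ρ am a x ∈ relTensor tH act sA am := by
  refine apply_mem_of_mem_span ?_ hx
  rintro _ ⟨r, c, m, rfl⟩
  have hswap : ∀ w : H ⊗[k] A,
      tensorAct act am (w ⊗ₜ (act (tH (op r)) c ⊗ₜ m - c ⊗ₜ am (sA r) m)) =
        tensorAct act am ((rTensor A (mulRight k (tH (op r))) w -
          lTensor H (mulRight k (sA r)) w) ⊗ₜ (c ⊗ₜ m)) := by
    intro w
    induction w using TensorProduct.induction_on with
    | zero => simp
    | tmul h b => simp [tmul_sub, sub_tmul, hact_mul, ham_mul]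
    | add w₁ w₂ h₁ h₂ =>
      rw [add_tmul, map_add, h₁, h₂, ← map_add, ← add_tmul, map_add, map_add, add_sub_add_comm]
  rw [diagSMul_apply, hswap]
  exact tensorAct_mem_relTensor hact_mul ham_mul ((Submodule.Quotient.eq _).1 (hρ_takeuchi r a)) _


theorem tmul_tmul_sub_mem_relCoringTensor (r : R) (c : C) (a : A) (m : M) :
    (act (tH (op r)) c ⊗ₜ a - c ⊗ₜ (sA r * a)) ⊗ₜ m ∈ relCoringTensor tH act sA am :=
  Submodule.subset_span (Or.inl ⟨r, c, a, m, rfl⟩)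

theorem mulRight_tmul_sub_mem_relCoringTensor (a : A) (y : C ⊗[k] A) (m : M) :
    lTensor C (mulRight k a) y ⊗ₜ m - y ⊗ₜ am a m ∈ relCoringTensor tH act sA am :=
  Submodule.subset_span (Or.inr ⟨a, y, m, rfl⟩)

theorem ofCoringTensor_toCoringTensor (ham_one : ∀ m : M, am 1 m = m) (x : C ⊗[k] M) :
    ofCoringTensor am (toCoringTensor k A x) = x := by
  induction x using TensorProduct.induction_on with
  | zero => simp
  | tmul c m => simp [ham_one]
  | add x y hx hy => simp [hx, hy]

theorem toCoringTensor_ofCoringTensor_sub_mem (z : (C ⊗[k] A) ⊗[k] M) :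
    toCoringTensor k A (ofCoringTensor am z) - z ∈ relCoringTensor tH act sA am := by
  refine apply_mem_of_forall_tmul_tmul (f := toCoringTensor k A ∘ₗ ofCoringTensor am - .id)
    (fun c a m => ?_) z
  have h : _ ∈ relCoringTensor tH act sA am := mulRight_tmul_sub_mem_relCoringTensor a (c ⊗ₜ 1) m
  simpa using neg_mem h

theorem toCoringTensor_mem {x : C ⊗[k] M} (hx : x ∈ relTensor tH act sA am) :
    toCoringTensor k A x ∈ relCoringTensor tH act sA am := by
  refine apply_mem_of_mem_span ?_ hx
  rintro _ ⟨r, c, m, rfl⟩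
  have h₁ : _ ∈ relCoringTensor tH act sA am := tmul_tmul_sub_mem_relCoringTensor r c 1 m
  have h₂ : _ ∈ relCoringTensor tH act sA am :=
    mulRight_tmul_sub_mem_relCoringTensor (sA r) (c ⊗ₜ 1) m
  simpa [sub_tmul] using add_mem h₁ h₂

theorem ofCoringTensor_mem (ham_mul : ∀ (a b : A) (m : M), am (a * b) m = am a (am b m))
    {z : (C ⊗[k] A) ⊗[k] M} (hz : z ∈ relCoringTensor tH act sA am) :
    ofCoringTensor am z ∈ relTensor tH act sA am := by
  refine apply_mem_of_mem_span ?_ hz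
  rintro _ (⟨r, c, a, m, rfl⟩ | ⟨a, y, m, rfl⟩)
  · simpa [sub_tmul, ham_mul] using tmul_sub_tmul_mem_relTensor r c (am a m)
  · suffices ofCoringTensor am (lTensor C (mulRight k a) y ⊗ₜ m) =
        ofCoringTensor am (y ⊗ₜ am a m) by simp [this]
    induction y using TensorProduct.induction_on with
    | zero => simp
    | tmul c b => simp [ham_mul]
    | add y y' hy hy' => simp [add_tmul, hy, hy']

theorem ofCoringTensor_rTensor_diagSMul
    (ham_mul : ∀ (a b : A) (m : M), am (a * b) m = am a (am b m)) (a : A)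
    (z : (C ⊗[k] A) ⊗[k] M) :
    ofCoringTensor am (rTensor M (diagSMul act ρ (mul k A) a) z) =
      diagSMul act ρ am a (ofCoringTensor am z) := by
  suffices ofCoringTensor am ∘ₗ rTensor M (diagSMul act ρ (mul k A) a) =
      diagSMul act ρ am a ∘ₗ ofCoringTensor am from LinearMap.congr_fun this z
  refine TensorProduct.ext_threefold fun c b m => ?_
  simp only [coe_comp, Function.comp_apply, rTensor_tmul, diagSMul_apply, ofCoringTensor_tmul]
  induction ρ a using TensorProduct.induction_on with
  | zero => simp
  | tmul h a' => simp [ham_mul]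
  | add w w' hw hw' => simp [add_tmul, hw, hw']

theorem toCoringTensor_diagSMul_sub_mem
    (ham_mul : ∀ (a b : A) (m : M), am (a * b) m = am a (am b m))
    (ham_one : ∀ m : M, am 1 m = m) (a : A) (x : C ⊗[k] M) :
    toCoringTensor k A (diagSMul act ρ am a x) -
        rTensor M (diagSMul act ρ (mul k A) a) (toCoringTensor k A x) ∈
      relCoringTensor tH act sA am := by
  -- transport along the isomorphism `ofCoringTensor`, which intertwines the two actions
  have h := toCoringTensor_ofCoringTensor_sub_mem (tH := tH) (act := act) (sA := sA) (am := am)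
    (rTensor M (diagSMul act ρ (mul k A) a) (toCoringTensor k A x))
  rwa [ofCoringTensor_rTensor_diagSMul ham_mul, ofCoringTensor_toCoringTensor ham_one] at h


theorem tmul_sub_tmul_mem_relTensor₃ (r : R) (c : C) (y : C ⊗[k] M) :
    act (tH (op r)) c ⊗ₜ y - c ⊗ₜ rTensor M (act (sH r)) y ∈ relTensor₃ sH tH act sA am :=
  Submodule.subset_span (Or.inl ⟨r, c, y, rfl⟩)

theorem tmul_mem_relTensor₃ (c : C) {x : C ⊗[k] M} (hx : x ∈ relTensor tH act sA am) :
    c ⊗ₜ x ∈ relTensor₃ sH tH act sA am := by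
  refine apply_mem_of_mem_span (f := TensorProduct.mk k C _ c) ?_ hx
  rintro _ ⟨r, c', m, rfl⟩
  rw [TensorProduct.mk_apply, tmul_sub]
  exact Submodule.subset_span (Or.inr ⟨r, c, c', m, rfl⟩)

theorem tmul_tmul_sub_mem_relCoringTensor₃ (r : R) (c : C) (a : A) (z : (C ⊗[k] A) ⊗[k] M) :
    (act (tH (op r)) c ⊗ₜ a - c ⊗ₜ (sA r * a)) ⊗ₜ z ∈ relCoringTensor₃ tH act sA ρ am :=
  Submodule.subset_span (Or.inl (Or.inl ⟨r, c, a, z, rfl⟩))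

theorem mulRight_tmul_sub_mem_relCoringTensor₃ (a : A) (y : C ⊗[k] A) (z : (C ⊗[k] A) ⊗[k] M) :
    lTensor C (mulRight k a) y ⊗ₜ z - y ⊗ₜ rTensor M (diagSMul act ρ (mul k A) a) z ∈
      relCoringTensor₃ tH act sA ρ am :=
  Submodule.subset_span (Or.inl (Or.inr ⟨a, y, z, rfl⟩))

theorem tmul_mem_relCoringTensor₃ (y : C ⊗[k] A) {w : (C ⊗[k] A) ⊗[k] M}
    (hw : w ∈ relCoringTensor tH act sA am) : y ⊗ₜ w ∈ relCoringTensor₃ tH act sA ρ am :=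
  Submodule.subset_span (Or.inr ⟨y, w, hw, rfl⟩)


theorem rTensor_act_eq_tensorAct (ham_one : ∀ m : M, am 1 m = m) (h : H) (y : C ⊗[k] M) :
    rTensor M (act h) y = tensorAct act am ((h ⊗ₜ (1 : A)) ⊗ₜ y) := by
  induction y using TensorProduct.induction_on with
  | zero => simp
  | tmul c m => simp [ham_one]
  | add y y' hy hy' => simp [tmul_add, hy, hy']

theorem rTensor_act_tensorAct (hact_mul : ∀ (g h : H) (c : C), act (g * h) c = act g (act h c))
    (h : H) (w : H ⊗[k] A) (y : C ⊗[k] M) :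
    rTensor M (act h) (tensorAct act am (w ⊗ₜ y)) =
      tensorAct act am (rTensor A (mulLeft k h) w ⊗ₜ y) := by
  induction w using TensorProduct.induction_on with
  | zero => simp
  | add w w' hw hw' => simp [add_tmul, hw, hw']
  | tmul g a =>
    induction y using TensorProduct.induction_on with
    | zero => simp
    | tmul c m => simp [hact_mul]
    | add y y' hy hy' => simp [tmul_add, hy, hy']

theorem diagSMul_sA_sub_mem_relTensor
    (hst : ∀ r r' : R, sH r * tH (op r') = tH (op r') * sH r)
    (hact_mul : ∀ (g h : H) (c : C), act (g * h) c = act g (act h c))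
    (ham_mul : ∀ (a b : A) (m : M), am (a * b) m = am a (am b m))
    (ham_one : ∀ m : M, am 1 m = m)
    (hρ_sA : ∀ (r : R) (a : A), (BGD.relA k R H tH A sA).mkQ (ρ (sA r * a)) =
      (BGD.relA k R H tH A sA).mkQ (rTensor A (mulLeft k (sH r)) (ρ a)))
    (hρ_one : (BGD.relA k R H tH A sA).mkQ (ρ 1) =
      (BGD.relA k R H tH A sA).mkQ ((1 : H) ⊗ₜ[k] (1 : A)))
    (r : R) (y : C ⊗[k] M) :
    diagSMul act ρ am (sA r) y - rTensor M (act (sH r)) y ∈ relTensor tH act sA am := by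
  rw [rTensor_act_eq_tensorAct ham_one, diagSMul_apply, ← map_sub, ← sub_tmul]
  exact tensorAct_mem_relTensor hact_mul ham_mul (rho_sA_sub_mem_relA hst hρ_sA hρ_one r) y

theorem toCoringTensor₃_mem (hst : ∀ r r' : R, sH r * tH (op r') = tH (op r') * sH r)
    (hact_mul : ∀ (g h : H) (c : C), act (g * h) c = act g (act h c))
    (ham_mul : ∀ (a b : A) (m : M), am (a * b) m = am a (am b m))
    (ham_one : ∀ m : M, am 1 m = m)
    (hρ_sA : ∀ (r : R) (a : A), (BGD.relA k R H tH A sA).mkQ (ρ (sA r * a)) =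
      (BGD.relA k R H tH A sA).mkQ (rTensor A (mulLeft k (sH r)) (ρ a)))
    (hρ_one : (BGD.relA k R H tH A sA).mkQ (ρ 1) =
      (BGD.relA k R H tH A sA).mkQ ((1 : H) ⊗ₜ[k] (1 : A)))
    {t : C ⊗[k] (C ⊗[k] M)} (ht : t ∈ relTensor₃ sH tH act sA am) :
    toCoringTensor₃ k A t ∈ relCoringTensor₃ tH act sA ρ am := by
  refine apply_mem_of_mem_span ?_ ht
  rintro _ (⟨r, c, y, rfl⟩ | ⟨r, c, c', m, rfl⟩)
  · -- move `s_A r` across the first tensor sign, then through the diagonal action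
    have h₁ : _ ∈ relCoringTensor₃ tH act sA ρ am :=
      tmul_tmul_sub_mem_relCoringTensor₃ r c 1 (toCoringTensor k A y)
    have h₂ : _ ∈ relCoringTensor₃ tH act sA ρ am :=
      mulRight_tmul_sub_mem_relCoringTensor₃ (sA r) (c ⊗ₜ 1) (toCoringTensor k A y)
    have h₃ : rTensor M (diagSMul act ρ (mul k A) (sA r)) (toCoringTensor k A y) -
        toCoringTensor k A (rTensor M (act (sH r)) y) ∈ relCoringTensor tH act sA am := by
      have e₁ := toCoringTensor_diagSMul_sub_mem (tH := tH) (act := act) (sA := sA) (ρ := ρ)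
        ham_mul ham_one (sA r) y
      have e₂ := toCoringTensor_mem (A := A)
        (diagSMul_sA_sub_mem_relTensor hst hact_mul ham_mul ham_one hρ_sA hρ_one r y)
      rw [map_sub] at e₂
      convert sub_mem e₂ e₁ using 1
      abel
    convert add_mem (add_mem h₁ h₂) (tmul_mem_relCoringTensor₃ (ρ := ρ) (c ⊗ₜ 1) h₃) using 1
    simp only [map_sub, toCoringTensor₃_tmul, lTensor_tmul, mulRight_apply, one_mul, mul_one,
      sub_tmul, tmul_sub]
    abel
  · rw [← tmul_sub, toCoringTensor₃_tmul]
    exact tmul_mem_relCoringTensor₃ _ (toCoringTensor_mem (tmul_sub_tmul_mem_relTensor r c' m))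

theorem ofCoringTensor₃_mem
    (hact_mul : ∀ (g h : H) (c : C), act (g * h) c = act g (act h c))
    (ham_mul : ∀ (a b : A) (m : M), am (a * b) m = am a (am b m))
    (hρ_sA : ∀ (r : R) (a : A), (BGD.relA k R H tH A sA).mkQ (ρ (sA r * a)) =
      (BGD.relA k R H tH A sA).mkQ (rTensor A (mulLeft k (sH r)) (ρ a)))
    (hρ_takeuchi : ∀ (r : R) (a : A),
      (BGD.relA k R H tH A sA).mkQ (rTensor A (mulRight k (tH (op r))) (ρ a)) =
        (BGD.relA k R H tH A sA).mkQ (lTensor H (mulRight k (sA r)) (ρ a)))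
    (hρ_mul : ∀ a b : A, (BGD.relA k R H tH A sA).mkQ (ρ (a * b)) =
      (BGD.relA k R H tH A sA).mkQ (ρ a * ρ b))
    {t : (C ⊗[k] A) ⊗[k] ((C ⊗[k] A) ⊗[k] M)} (ht : t ∈ relCoringTensor₃ tH act sA ρ am) :
    ofCoringTensor₃ act ρ am t ∈ relTensor₃ sH tH act sA am := by
  refine apply_mem_of_mem_span ?_ ht
  rintro _ ((⟨r, c, a, z, rfl⟩ | ⟨a', y, z, rfl⟩) | ⟨y, w, hw, rfl⟩)
  · set x := ofCoringTensor am z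
    have h₁ : _ ∈ relTensor₃ sH tH act sA am :=
      tmul_sub_tmul_mem_relTensor₃ r c (diagSMul act ρ am a x)
    have h₂ : rTensor M (act (sH r)) (diagSMul act ρ am a x) - diagSMul act ρ am (sA r * a) x ∈
        relTensor tH act sA am := by
      rw [diagSMul_apply, diagSMul_apply, rTensor_act_tensorAct hact_mul, ← map_sub, ← sub_tmul]
      exact tensorAct_mem_relTensor hact_mul ham_mul
        ((Submodule.Quotient.eq _).1 (hρ_sA r a).symm) x
    convert add_mem h₁ (tmul_mem_relTensor₃ (sH := sH) c h₂) using 1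
    simp only [map_sub, sub_tmul, ofCoringTensor₃_tmul, tmul_sub]
    abel
  · refine apply_mem_of_forall_tmul (f := ofCoringTensor₃ act ρ am ∘ₗ
      ((TensorProduct.mk k _ _).flip z ∘ₗ lTensor C (mulRight k a') -
        (TensorProduct.mk k _ _).flip (rTensor M (diagSMul act ρ (mul k A) a') z)))
      (fun c a => ?_) y
    have h : diagSMul act ρ am (a * a') (ofCoringTensor am z) -
        diagSMul act ρ am a (diagSMul act ρ am a' (ofCoringTensor am z)) ∈
        relTensor tH act sA am := by
      rw [diagSMul_apply, diagSMul_apply, diagSMul_apply,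
        tensorAct_tmul_tensorAct hact_mul ham_mul, ← map_sub, ← sub_tmul]
      exact tensorAct_mem_relTensor hact_mul ham_mul ((Submodule.Quotient.eq _).1 (hρ_mul a a')) _
    simpa [ofCoringTensor_rTensor_diagSMul ham_mul, ← tmul_sub] using
      tmul_mem_relTensor₃ (sH := sH) c h
  · refine apply_mem_of_forall_tmul (f := ofCoringTensor₃ act ρ am ∘ₗ
      (TensorProduct.mk k _ _).flip w) (fun c a => ?_) y
    simpa using tmul_mem_relTensor₃ (sH := sH) c
      (diagSMul_mem_relTensor hact_mul ham_mul hρ_takeuchi a (ofCoringTensor_mem ham_mul hw))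

variable (ΔC : C →ₗ[k] C ⊗[k] C)

theorem rTensor_coringComul_toCoringTensor (x : C ⊗[k] M) :
    TensorProduct.assoc k _ _ M (rTensor M (coringComul A ΔC) (toCoringTensor k A x)) =
      toCoringTensor₃ k A (TensorProduct.assoc k C C M (rTensor M ΔC x)) := by
  induction x using TensorProduct.induction_on with
  | zero => simp
  | add x y hx hy => simp only [map_add, hx, hy]
  | tmul c m =>
    simp only [coringComul, toCoringTensor_tmul, rTensor_tmul, coe_comp, Function.comp_apply]
    induction ΔC c using TensorProduct.induction_on with
    | zero => simp
    | tmul c₁ c₂ => simp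
    | add q q' hq hq' => simp only [add_tmul, map_add, hq, hq']

theorem ofCoringTensor₃_rTensor_coringComul (ham_one : ∀ m : M, am 1 m = m)
    (z : (C ⊗[k] A) ⊗[k] M) :
    ofCoringTensor₃ act ρ am (TensorProduct.assoc k _ _ M (rTensor M (coringComul A ΔC) z)) =
      ofCoringTensor₃ act ρ am (toCoringTensor₃ k A
        (TensorProduct.assoc k C C M (rTensor M ΔC (ofCoringTensor am z)))) := by
  induction z using TensorProduct.induction_on with
  | zero => simp
  | add x y hx hy => simp only [map_add, hx, hy]
  | tmul y m =>
    induction y using TensorProduct.induction_on with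
    | zero => simp
    | add y y' hy hy' => simp only [add_tmul, map_add, hy, hy']
    | tmul c a =>
      simp only [coringComul, ofCoringTensor_tmul, rTensor_tmul, coe_comp, Function.comp_apply]
      induction ΔC c using TensorProduct.induction_on with
      | zero => simp
      | tmul c₁ c₂ => simp [ham_one]
      | add q q' hq hq' => simp only [add_tmul, map_add, hq, hq']

theorem lTensor_toCoringTensor_comp (f : M →ₗ[k] C ⊗[k] M) (x : C ⊗[k] M) :
    lTensor (C ⊗[k] A) (toCoringTensor k A ∘ₗ f) (toCoringTensor k A x) =
      toCoringTensor₃ k A (lTensor C f x) := by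
  induction x using TensorProduct.induction_on with
  | zero => simp
  | add x y hx hy => simp only [map_add, hx, hy]
  | tmul c m => simp

theorem ofCoringTensor₃_toCoringTensor₃_sub_mem
    (hact_mul : ∀ (g h : H) (c : C), act (g * h) c = act g (act h c))
    (hact_one : ∀ c : C, act 1 c = c)
    (ham_mul : ∀ (a b : A) (m : M), am (a * b) m = am a (am b m))
    (ham_one : ∀ m : M, am 1 m = m)
    (hρ_one : (BGD.relA k R H tH A sA).mkQ (ρ 1) =
      (BGD.relA k R H tH A sA).mkQ ((1 : H) ⊗ₜ[k] (1 : A)))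
    (t : C ⊗[k] (C ⊗[k] M)) :
    ofCoringTensor₃ act ρ am (toCoringTensor₃ k A t) - t ∈ relTensor₃ sH tH act sA am := by
  refine apply_mem_of_forall_tmul
    (f := ofCoringTensor₃ act ρ am ∘ₗ toCoringTensor₃ k A - .id) (fun c y => ?_) t
  have h := tensorAct_mem_relTensor hact_mul ham_mul ((Submodule.Quotient.eq _).1 hρ_one) y
  rw [sub_tmul, map_sub, tensorAct_one_tmul hact_one ham_one] at h
  simpa [ofCoringTensor_toCoringTensor ham_one, diagSMul_apply, ← tmul_sub] using
    tmul_mem_relTensor₃ (sH := sH) c h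

theorem ofCoringTensor₃_lTensor_sub_mem (f : M →ₗ[k] (C ⊗[k] A) ⊗[k] M)
    (hf : ∀ (a : A) (m : M), ofCoringTensor am (f (am a m)) -
      diagSMul act ρ am a (ofCoringTensor am (f m)) ∈ relTensor tH act sA am)
    (z : (C ⊗[k] A) ⊗[k] M) :
    ofCoringTensor₃ act ρ am (lTensor _ f z) - lTensor C (ofCoringTensor am ∘ₗ f)
      (ofCoringTensor am z) ∈ relTensor₃ sH tH act sA am := by
  refine apply_mem_of_forall_tmul_tmul (f := ofCoringTensor₃ act ρ am ∘ₗ lTensor _ f -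
    lTensor C (ofCoringTensor am ∘ₗ f) ∘ₗ ofCoringTensor am) (fun c a m => ?_) z
  have h := neg_mem (tmul_mem_relTensor₃ (sH := sH) c (hf a m))
  rw [← tmul_neg, neg_sub] at h
  simpa [← tmul_sub] using h

variable (εC : C →ₗ[k] R)

theorem counit_toCoringTensor (x : C ⊗[k] M) :
    lift (am ∘ₗ mul' k A ∘ₗ map (sA.toLinearMap ∘ₗ εC) LinearMap.id) (toCoringTensor k A x) =
      lift (am ∘ₗ sA.toLinearMap ∘ₗ εC) x := by
  induction x using TensorProduct.induction_on with
  | zero => simp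
  | add x y hx hy => simp only [map_add, hx, hy]
  | tmul c m => simp

theorem counit_ofCoringTensor (ham_mul : ∀ (a b : A) (m : M), am (a * b) m = am a (am b m))
    (z : (C ⊗[k] A) ⊗[k] M) :
    lift (am ∘ₗ sA.toLinearMap ∘ₗ εC) (ofCoringTensor am z) =
      lift (am ∘ₗ mul' k A ∘ₗ map (sA.toLinearMap ∘ₗ εC) LinearMap.id) z := by
  suffices lift (am ∘ₗ sA.toLinearMap ∘ₗ εC) ∘ₗ ofCoringTensor am =
      lift (am ∘ₗ mul' k A ∘ₗ map (sA.toLinearMap ∘ₗ εC) LinearMap.id) from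
    LinearMap.congr_fun this z
  exact TensorProduct.ext_threefold fun c a m => by simp [ham_mul]

variable {ΔC εC}

theorem isCoringCoaction_toCoringTensor_comp
    (hst : ∀ r r' : R, sH r * tH (op r') = tH (op r') * sH r)
    (hact_mul : ∀ (g h : H) (c : C), act (g * h) c = act g (act h c))
    (ham_mul : ∀ (a b : A) (m : M), am (a * b) m = am a (am b m))
    (ham_one : ∀ m : M, am 1 m = m)
    (hρ_sA : ∀ (r : R) (a : A), (BGD.relA k R H tH A sA).mkQ (ρ (sA r * a)) =
      (BGD.relA k R H tH A sA).mkQ (rTensor A (mulLeft k (sH r)) (ρ a)))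
    (hρ_one : (BGD.relA k R H tH A sA).mkQ (ρ 1) =
      (BGD.relA k R H tH A sA).mkQ ((1 : H) ⊗ₜ[k] (1 : A)))
    {ρM : M →ₗ[k] C ⊗[k] M} (h : IsDKCoaction sH tH act sA ρ am ΔC εC ρM) :
    IsCoringCoaction tH act sA ρ am ΔC εC (toCoringTensor k A ∘ₗ ρM) := by
  obtain ⟨hcoassoc, hcounit, hlin⟩ := h
  refine ⟨fun m => (Submodule.Quotient.eq _).2 ?_, fun m => ?_,
    fun a m => (Submodule.Quotient.eq _).2 ?_⟩
  · rw [comp_apply, rTensor_coringComul_toCoringTensor, lTensor_toCoringTensor_comp, ← map_sub]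
    exact toCoringTensor₃_mem hst hact_mul ham_mul ham_one hρ_sA hρ_one
      ((Submodule.Quotient.eq _).1 (hcoassoc m))
  · rw [comp_apply, counit_toCoringTensor]
    exact hcounit m
  · have e₁ := toCoringTensor_mem (A := A) ((Submodule.Quotient.eq _).1 (hlin a m))
    have e₂ := toCoringTensor_diagSMul_sub_mem (tH := tH) (act := act) (sA := sA) (ρ := ρ)
      ham_mul ham_one a (ρM m)
    rw [map_sub] at e₁
    simpa using add_mem e₁ e₂

theorem isDKCoaction_ofCoringTensor_comp
    (hact_mul : ∀ (g h : H) (c : C), act (g * h) c = act g (act h c))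
    (hact_one : ∀ c : C, act 1 c = c)
    (ham_mul : ∀ (a b : A) (m : M), am (a * b) m = am a (am b m))
    (ham_one : ∀ m : M, am 1 m = m)
    (hρ_sA : ∀ (r : R) (a : A), (BGD.relA k R H tH A sA).mkQ (ρ (sA r * a)) =
      (BGD.relA k R H tH A sA).mkQ (rTensor A (mulLeft k (sH r)) (ρ a)))
    (hρ_takeuchi : ∀ (r : R) (a : A),
      (BGD.relA k R H tH A sA).mkQ (rTensor A (mulRight k (tH (op r))) (ρ a)) =
        (BGD.relA k R H tH A sA).mkQ (lTensor H (mulRight k (sA r)) (ρ a)))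
    (hρ_mul : ∀ a b : A, (BGD.relA k R H tH A sA).mkQ (ρ (a * b)) =
      (BGD.relA k R H tH A sA).mkQ (ρ a * ρ b))
    (hρ_one : (BGD.relA k R H tH A sA).mkQ (ρ 1) =
      (BGD.relA k R H tH A sA).mkQ ((1 : H) ⊗ₜ[k] (1 : A)))
    {ρ' : M →ₗ[k] (C ⊗[k] A) ⊗[k] M} (h : IsCoringCoaction tH act sA ρ am ΔC εC ρ') :
    IsDKCoaction sH tH act sA ρ am ΔC εC (ofCoringTensor am ∘ₗ ρ') := by
  obtain ⟨hcoassoc, hcounit, hlin⟩ := h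
  have hlinM (a : A) (m : M) : ofCoringTensor am (ρ' (am a m)) -
      diagSMul act ρ am a (ofCoringTensor am (ρ' m)) ∈ relTensor tH act sA am := by
    have h := ofCoringTensor_mem ham_mul ((Submodule.Quotient.eq _).1 (hlin a m))
    rwa [map_sub, ofCoringTensor_rTensor_diagSMul ham_mul] at h
  refine ⟨fun m => (Submodule.Quotient.eq _).2 ?_, fun m => ?_,
    fun a m => (Submodule.Quotient.eq _).2 (hlinM a m)⟩
  · -- apply `ofCoringTensor₃`, a left inverse of `toCoringTensor₃` up to balancing, to the
    -- coassociativity of `ρ'`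
    have e₁ := ofCoringTensor₃_toCoringTensor₃_sub_mem (sH := sH) hact_mul hact_one ham_mul
      ham_one hρ_one (TensorProduct.assoc k C C M (rTensor M ΔC (ofCoringTensor am (ρ' m))))
    rw [← ofCoringTensor₃_rTensor_coringComul ΔC ham_one] at e₁
    have e₂ := ofCoringTensor₃_mem (sH := sH) hact_mul ham_mul hρ_sA hρ_takeuchi hρ_mul
      ((Submodule.Quotient.eq _).1 (hcoassoc m))
    have e₃ := ofCoringTensor₃_lTensor_sub_mem (sH := sH) ρ' hlinM (ρ' m)
    rw [map_sub] at e₂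
    convert sub_mem (add_mem e₂ e₃) e₁ using 1
    simp only [comp_apply]
    abel
  · rw [comp_apply, counit_ofCoringTensor εC ham_mul]
    exact hcounit m

end DoiKoppinen

open TensorProduct LinearMap MulOpposite

/-- Let `(H, A, C)_R` be a Doi-Koppinen datum over `R` and `𝒞 = C ⊗_R A` the
associated `A`-coring.  The category of left `𝒞`-comodules is isomorphic to the category
of left-left Doi-Koppinen modules over `R`: for any left `A`-module `M`, the structures of
a left `𝒞`-comodule and of a Doi-Koppinen module on `M` correspond bijectively via the
canonical isomorphism `𝒞 ⊗_A M = C ⊗_R A ⊗_A M ≅ C ⊗_R M`, `(c ⊗ a) ⊗ m ↦ c ⊗ a·m`,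
`c ⊗ m ↦ (c ⊗ 1) ⊗ m`. -/
theorem stmt17 (k : Type*) [CommRing k] (R H : Type*) [Ring R] [Ring H]
    [Algebra k R] [Algebra k H]
    (sH : R →ₐ[k] H) (tH : Rᵐᵒᵖ →ₐ[k] H)
    (ΔH : H →ₗ[k] H ⊗[k] H) (εH : H →ₗ[k] R)
    (C : Type*) [AddCommGroup C] [Module k C]
    (act : H →ₗ[k] C →ₗ[k] C) (ΔC : C →ₗ[k] C ⊗[k] C) (εC : C →ₗ[k] R)
    (A : Type*) [Ring A] [Algebra k A] (sA : R →ₐ[k] A) (ρ : A →ₗ[k] H ⊗[k] A)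
    (hbgd : BGD.IsBialgebroid k R H sH tH ΔH εH)
    (hC : BGD.IsModuleCoalgebra k R H sH tH ΔH εH C act ΔC εC)
    (hA : BGD.IsComoduleAlgebra k R H sH tH ΔH εH A sA ρ) :
    ∀ (M : Type) [AddCommGroup M] [Module k M] (am : A →ₗ[k] M →ₗ[k] M),
      (∀ (a b : A) (m : M), am (a * b) m = am a (am b m)) →
      (∀ m : M, am 1 m = m) →
      -- `C ⊗_R M` and `C ⊗_R C ⊗_R M`:
      letI relCM : Submodule k (C ⊗[k] M) := Submodule.span k
        {x | ∃ (r : R) (c : C) (m : M),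
          x = (act (tH (op r)) c) ⊗ₜ[k] m - c ⊗ₜ[k] (am (sA r) m)}
      letI rel3CM : Submodule k (C ⊗[k] (C ⊗[k] M)) := Submodule.span k
        ({x | ∃ (r : R) (c : C) (y : C ⊗[k] M),
            x = (act (tH (op r)) c) ⊗ₜ[k] y -
              c ⊗ₜ[k] ((LinearMap.rTensor M (act (sH r))) y)} ∪
         {x | ∃ (r : R) (c c' : C) (m : M),
            x = c ⊗ₜ[k] ((act (tH (op r)) c') ⊗ₜ[k] m) -
              c ⊗ₜ[k] (c' ⊗ₜ[k] (am (sA r) m))})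
      -- the diagonal action `a · (c ⊗ m) = a₍₋₁₎·c ⊗ a₍₀₎·m` on `C ⊗ M`:
      letI theta : A → (C ⊗[k] M →ₗ[k] C ⊗[k] M) := fun a =>
        (TensorProduct.map (TensorProduct.lift act) (TensorProduct.lift am) ∘ₗ
          (TensorProduct.tensorTensorTensorComm k H A C M).toLinearMap) ∘ₗ
          TensorProduct.mk k (H ⊗[k] A) (C ⊗[k] M) (ρ a)
      -- Doi-Koppinen module conditions for a coaction `ρM : M → C ⊗_R M`:
      letI DKcond : (M →ₗ[k] C ⊗[k] M) → Prop := fun ρM =>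
        (∀ m : M, rel3CM.mkQ
            ((TensorProduct.assoc k C C M) ((LinearMap.rTensor M ΔC) (ρM m))) =
          rel3CM.mkQ ((LinearMap.lTensor C ρM) (ρM m))) ∧
        (∀ m : M,
          (TensorProduct.lift (am ∘ₗ sA.toLinearMap ∘ₗ εC)) (ρM m) = m) ∧
        (∀ (a : A) (m : M),
          relCM.mkQ (ρM (am a m)) = relCM.mkQ (theta a (ρM m)))
      -- `𝒞 ⊗_A M` as a quotient of `(C ⊗ A) ⊗ M`; the left `A`-action on `C ⊗ A`:
      letI lam : A → (C ⊗[k] A →ₗ[k] C ⊗[k] A) := fun a =>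
        (TensorProduct.map (TensorProduct.lift act) (LinearMap.mul' k A) ∘ₗ
          (TensorProduct.tensorTensorTensorComm k H A C A).toLinearMap) ∘ₗ
          TensorProduct.mk k (H ⊗[k] A) (C ⊗[k] A) (ρ a)
      letI relF : Submodule k ((C ⊗[k] A) ⊗[k] M) := Submodule.span k
        ({x | ∃ (r : R) (c : C) (a : A) (m : M),
            x = ((act (tH (op r)) c) ⊗ₜ[k] a - c ⊗ₜ[k] (sA r * a)) ⊗ₜ[k] m} ∪
         {x | ∃ (a' : A) (y : C ⊗[k] A) (m : M),
            x = ((LinearMap.lTensor C (LinearMap.mulRight k a')) y) ⊗ₜ[k] m -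
              y ⊗ₜ[k] (am a' m)})
      -- the coproduct of `𝒞` in the form `𝒞 → 𝒞 ⊗ 𝒞`, `c ⊗ a ↦ (c₍₁₎ ⊗ 1) ⊗ (c₍₂₎ ⊗ a)`:
      letI D' : C ⊗[k] A →ₗ[k] (C ⊗[k] A) ⊗[k] (C ⊗[k] A) :=
        TensorProduct.map ((TensorProduct.mk k C A).flip (1 : A)) LinearMap.id ∘ₗ
          (TensorProduct.assoc k C C A).toLinearMap ∘ₗ LinearMap.rTensor A ΔC
      letI relX : Submodule k ((C ⊗[k] A) ⊗[k] ((C ⊗[k] A) ⊗[k] M)) := Submodule.span k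
        ({x | ∃ (r : R) (c : C) (a : A) (z : (C ⊗[k] A) ⊗[k] M),
            x = ((act (tH (op r)) c) ⊗ₜ[k] a - c ⊗ₜ[k] (sA r * a)) ⊗ₜ[k] z} ∪
         {x | ∃ (a' : A) (y : C ⊗[k] A) (z : (C ⊗[k] A) ⊗[k] M),
            x = ((LinearMap.lTensor C (LinearMap.mulRight k a')) y) ⊗ₜ[k] z -
              y ⊗ₜ[k] ((LinearMap.rTensor M (lam a')) z)} ∪
         {x | ∃ (y : C ⊗[k] A) (w : (C ⊗[k] A) ⊗[k] M), w ∈ relF ∧ x = y ⊗ₜ[k] w})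
      -- `𝒞`-comodule conditions for a coaction `ρ' : M → 𝒞 ⊗_A M`:
      letI Ccond : (M →ₗ[k] (C ⊗[k] A) ⊗[k] M) → Prop := fun ρ' =>
        (∀ m : M, relX.mkQ
            ((TensorProduct.assoc k (C ⊗[k] A) (C ⊗[k] A) M)
              ((LinearMap.rTensor M D') (ρ' m))) =
          relX.mkQ ((LinearMap.lTensor (C ⊗[k] A) ρ') (ρ' m))) ∧
        (∀ m : M,
          (TensorProduct.lift (am ∘ₗ LinearMap.mul' k A ∘ₗ
            TensorProduct.map (sA.toLinearMap ∘ₗ εC) LinearMap.id)) (ρ' m) = m) ∧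
        (∀ (a : A) (m : M),
          relF.mkQ (ρ' (am a m)) = relF.mkQ ((LinearMap.rTensor M (lam a)) (ρ' m)))
      -- the mutually inverse canonical maps:
      letI v : C ⊗[k] M →ₗ[k] (C ⊗[k] A) ⊗[k] M :=
        LinearMap.rTensor M ((TensorProduct.mk k C A).flip (1 : A))
      letI u : (C ⊗[k] A) ⊗[k] M →ₗ[k] C ⊗[k] M :=
        LinearMap.lTensor C (TensorProduct.lift am) ∘ₗ
          (TensorProduct.assoc k C A M).toLinearMap
      -- the isomorphism of categories, on structures over `M`:
      (∀ ρM : M →ₗ[k] C ⊗[k] M, DKcond ρM → Ccond (v ∘ₗ ρM)) ∧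
      (∀ ρ' : M →ₗ[k] (C ⊗[k] A) ⊗[k] M, Ccond ρ' → DKcond (u ∘ₗ ρ')) ∧
      (∀ ρM : M →ₗ[k] C ⊗[k] M, DKcond ρM →
        ∀ m : M, relCM.mkQ (u (v (ρM m))) = relCM.mkQ (ρM m)) ∧
      (∀ ρ' : M →ₗ[k] (C ⊗[k] A) ⊗[k] M, Ccond ρ' →
        ∀ m : M, relF.mkQ (v (u (ρ' m))) = relF.mkQ (ρ' m)) := by
  intro M _ _ am ham_mul ham_one
  obtain ⟨hst, -⟩ := hbgd
  obtain ⟨hact_mul, hact_one, -⟩ := hC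
  obtain ⟨-, -, hρ_sA, hρ_takeuchi, hρ_mul, hρ_one⟩ := hA
  exact ⟨fun _ => DoiKoppinen.isCoringCoaction_toCoringTensor_comp hst hact_mul ham_mul ham_one
      hρ_sA hρ_one,
    fun _ => DoiKoppinen.isDKCoaction_ofCoringTensor_comp hact_mul hact_one ham_mul ham_one hρ_sA
      hρ_takeuchi hρ_mul hρ_one,
    fun _ _ _ => congrArg _ (DoiKoppinen.ofCoringTensor_toCoringTensor ham_one _),
    fun _ _ _ => (Submodule.Quotient.eq _).2 (DoiKoppinen.toCoringTensor_ofCoringTensor_sub_mem _)⟩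
end
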